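/- arXiv:1612.06735 — 2 statements merged into one kernel-verified Lean document; each statement's English description precedes it below -/
import Mathlib

section
/- In the weak-interaction random model with centred interactions (μ_A = 0), for every fixed index i, the equilibrium coordinate x*^{(S)}_i converges almost surely as S → ∞ to r_i/|θ|. In particular, if r_i > 0 for all i, the limiting equilibrium is feasible (all limits are strictly positive). -/
open MeasureTheory ProbabilityTheory Matrix Filter Finset
/-- Frobenius-norm-squared of the Gram matrix of the top-left `m × m` corner of `b`. -/
noncomputable def lvGram (b : ℕ → ℕ → ℝ) (m : ℕ) : ℝ :=
  ∑ i ∈ Finset.range m, ∑ j ∈ Finset.range m,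
    (∑ k ∈ Finset.range m, b k i * b k j) ^ 2

lemma lvGram_nonneg (b : ℕ → ℕ → ℝ) (m : ℕ) : 0 ≤ lvGram b m :=
  Finset.sum_nonneg fun _ _ => Finset.sum_nonneg fun _ _ => sq_nonneg _

/-- Quadratic-form bound: `‖B w‖² ≤ ‖BᵀB‖_F ‖w‖²` over `range m`. -/
lemma lv_quad_bound (b : ℕ → ℕ → ℝ) (m : ℕ) (w : ℕ → ℝ) :
    ∑ i ∈ Finset.range m, (∑ j ∈ Finset.range m, b i j * w j) ^ 2 ≤
      Real.sqrt (lvGram b m) * ∑ j ∈ Finset.range m, (w j) ^ 2 := by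
  set R := Finset.range m
  set T : ℕ → ℕ → ℝ := fun j k => ∑ i ∈ R, b i j * b i k with hT
  have key : ∑ i ∈ R, (∑ j ∈ R, b i j * w j) ^ 2
      = ∑ j ∈ R, w j * (∑ k ∈ R, T j k * w k) := by
    have e1 : ∀ i, (∑ j ∈ R, b i j * w j) ^ 2
        = ∑ j ∈ R, ∑ k ∈ R, b i j * w j * (b i k * w k) := by
      intro i; rw [sq, Finset.sum_mul_sum]
    simp_rw [e1]
    rw [Finset.sum_comm]
    refine Finset.sum_congr rfl fun j _ => ?_
    rw [Finset.sum_comm]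
    rw [Finset.mul_sum]
    refine Finset.sum_congr rfl fun k _ => ?_
    rw [hT]
    simp only []
    rw [Finset.sum_mul, Finset.mul_sum]
    refine Finset.sum_congr rfl fun i _ => ?_
    ring
  rw [key]
  have cs1 : ∑ j ∈ R, w j * (∑ k ∈ R, T j k * w k) ≤
      Real.sqrt (∑ j ∈ R, (w j) ^ 2) *
        Real.sqrt (∑ j ∈ R, (∑ k ∈ R, T j k * w k) ^ 2) :=
    Real.sum_mul_le_sqrt_mul_sqrt R w _
  have cs2 : ∑ j ∈ R, (∑ k ∈ R, T j k * w k) ^ 2 ≤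
      lvGram b m * ∑ k ∈ R, (w k) ^ 2 := by
    have : ∀ j, (∑ k ∈ R, T j k * w k) ^ 2 ≤
        (∑ k ∈ R, (T j k) ^ 2) * ∑ k ∈ R, (w k) ^ 2 :=
      fun j => Finset.sum_mul_sq_le_sq_mul_sq R _ _
    calc ∑ j ∈ R, (∑ k ∈ R, T j k * w k) ^ 2
        ≤ ∑ j ∈ R, (∑ k ∈ R, (T j k) ^ 2) * ∑ k ∈ R, (w k) ^ 2 :=
          Finset.sum_le_sum fun j _ => this j
      _ = lvGram b m * ∑ k ∈ R, (w k) ^ 2 := by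
          rw [← Finset.sum_mul]; rfl
  have hW : (0:ℝ) ≤ ∑ j ∈ R, (w j) ^ 2 := Finset.sum_nonneg fun _ _ => sq_nonneg _
  calc ∑ j ∈ R, w j * (∑ k ∈ R, T j k * w k)
      ≤ Real.sqrt (∑ j ∈ R, (w j) ^ 2) *
          Real.sqrt (∑ j ∈ R, (∑ k ∈ R, T j k * w k) ^ 2) := cs1
    _ ≤ Real.sqrt (∑ j ∈ R, (w j) ^ 2) *
          Real.sqrt (lvGram b m * ∑ k ∈ R, (w k) ^ 2) := by
        exact mul_le_mul_of_nonneg_left (Real.sqrt_le_sqrt cs2) (Real.sqrt_nonneg _)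
    _ = Real.sqrt (lvGram b m) * ∑ j ∈ R, (w j) ^ 2 := by
        rw [Real.sqrt_mul (lvGram_nonneg b m), ← mul_assoc,
          mul_comm (Real.sqrt (∑ j ∈ R, (w j) ^ 2)), mul_assoc,
          Real.mul_self_sqrt hW]

/-- Corner monotonicity + quadratic form bound, `Fin` version. -/
lemma lv_corner (b : ℕ → ℕ → ℝ) {S m : ℕ} (hSm : S ≤ m) (v : Fin S → ℝ) :
    ∑ i : Fin S, (∑ j : Fin S, b i j * v j) ^ 2 ≤
      Real.sqrt (lvGram b m) * ∑ j : Fin S, (v j) ^ 2 := by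
  classical
  set w : ℕ → ℝ := fun j => if h : j < S then v ⟨j, h⟩ else 0 with hw
  have hsub : Finset.range S ⊆ Finset.range m := Finset.range_subset_range.2 hSm
  have hwv : ∀ j : Fin S, w j = v j := by
    intro j; simp [hw, j.isLt]
  have inner_eq : ∀ i : ℕ, ∑ j : Fin S, b i j * v j = ∑ j ∈ Finset.range m, b i j * w j := by
    intro i
    have h1 : ∑ j : Fin S, b i j * v j = ∑ j ∈ Finset.range S, b i j * w j := by
      rw [← Fin.sum_univ_eq_sum_range (fun j => b i j * w j) S]
      exact Finset.sum_congr rfl fun j _ => by rw [hwv j]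
    rw [h1]
    refine Finset.sum_subset hsub fun j _ hj => ?_
    have : ¬ j < S := by simpa using hj
    simp [hw, this]
  have outer_le : ∑ i : Fin S, (∑ j : Fin S, b i j * v j) ^ 2 ≤
      ∑ i ∈ Finset.range m, (∑ j ∈ Finset.range m, b i j * w j) ^ 2 := by
    have h1 : ∑ i : Fin S, (∑ j : Fin S, b i j * v j) ^ 2
        = ∑ i ∈ Finset.range S, (∑ j ∈ Finset.range m, b i j * w j) ^ 2 := by
      rw [← Fin.sum_univ_eq_sum_range (fun i => (∑ j ∈ Finset.range m, b i j * w j) ^ 2) S]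
      exact Finset.sum_congr rfl fun i _ => by rw [inner_eq i]
    rw [h1]
    exact Finset.sum_le_sum_of_subset_of_nonneg hsub fun _ _ _ => sq_nonneg _
  have wsum : ∑ j ∈ Finset.range m, (w j) ^ 2 = ∑ j : Fin S, (v j) ^ 2 := by
    have h1 : ∑ j ∈ Finset.range m, (w j) ^ 2 = ∑ j ∈ Finset.range S, (w j) ^ 2 := by
      symm
      refine Finset.sum_subset hsub fun j _ hj => ?_
      have : ¬ j < S := by simpa using hj
      simp [hw, this]
    rw [h1, ← Fin.sum_univ_eq_sum_range (fun j => (w j) ^ 2) S]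
    exact Finset.sum_congr rfl fun j _ => by rw [hwv j]
  calc ∑ i : Fin S, (∑ j : Fin S, b i j * v j) ^ 2
      ≤ ∑ i ∈ Finset.range m, (∑ j ∈ Finset.range m, b i j * w j) ^ 2 := outer_le
    _ ≤ Real.sqrt (lvGram b m) * ∑ j ∈ Finset.range m, (w j) ^ 2 := lv_quad_bound b m w
    _ = Real.sqrt (lvGram b m) * ∑ j : Fin S, (v j) ^ 2 := by rw [wsum]

/-- If the integrals of nonnegative functions are summably bounded, the functions tend to `0`
almost everywhere. -/
lemma lv_ae_tendsto_zero {Ω : Type*} [MeasureSpace Ω]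
    {u : ℕ → Ω → ℝ} (hmeas : ∀ n, Measurable (u n)) (hnn : ∀ n ω, 0 ≤ u n ω)
    (hint : ∀ n, Integrable (u n) (ℙ : Measure Ω))
    {c : ℕ → ℝ} (hc : Summable c) (hb : ∀ n, ∫ ω, u n ω ∂(ℙ : Measure Ω) ≤ c n) :
    ∀ᵐ ω ∂(ℙ : Measure Ω), Tendsto (fun n => u n ω) atTop (nhds 0) := by
  have hcnn : ∀ n, 0 ≤ c n := fun n => le_trans (integral_nonneg (hnn n)) (hb n)
  have h1 : ∫⁻ ω, ∑' n, ENNReal.ofReal (u n ω) ∂(ℙ : Measure Ω)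
      = ∑' n, ∫⁻ ω, ENNReal.ofReal (u n ω) ∂(ℙ : Measure Ω) :=
    lintegral_tsum fun n => ((hmeas n).ennreal_ofReal).aemeasurable
  have h2 : ∀ n, ∫⁻ ω, ENNReal.ofReal (u n ω) ∂(ℙ : Measure Ω)
      = ENNReal.ofReal (∫ ω, u n ω ∂(ℙ : Measure Ω)) :=
    fun n => (ofReal_integral_eq_lintegral_ofReal (hint n)
      (Filter.Eventually.of_forall (hnn n))).symm
  have h3 : ∑' n, ∫⁻ ω, ENNReal.ofReal (u n ω) ∂(ℙ : Measure Ω) ≤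
      ENNReal.ofReal (∑' n, c n) := by
    rw [ENNReal.ofReal_tsum_of_nonneg hcnn hc]
    refine ENNReal.tsum_le_tsum fun n => ?_
    rw [h2 n]
    exact ENNReal.ofReal_le_ofReal (hb n)
  have h4 : ∫⁻ ω, ∑' n, ENNReal.ofReal (u n ω) ∂(ℙ : Measure Ω) ≠ ⊤ := by
    rw [h1]
    exact ne_top_of_le_ne_top ENNReal.ofReal_ne_top h3
  have h5 : ∀ᵐ ω ∂(ℙ : Measure Ω), ∑' n, ENNReal.ofReal (u n ω) < ⊤ :=
    ae_lt_top (by exact Measurable.ennreal_tsum fun n => (hmeas n).ennreal_ofReal) h4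
  filter_upwards [h5] with ω hω
  have hsumm : Summable fun n => (ENNReal.ofReal (u n ω)).toReal :=
    ENNReal.summable_toReal hω.ne
  have : Summable fun n => u n ω := by
    convert hsumm using 2 with n
    rw [ENNReal.toReal_ofReal (hnn n ω)]
  exact this.tendsto_atTop_zero


lemma lv_abs_pow_le (x : ℝ) {k : ℕ} (hk : k ≤ 8) : |x ^ k| ≤ 1 + x ^ 8 := by
  rw [abs_pow]
  rcases le_total |x| 1 with h | h
  · have : |x| ^ k ≤ 1 := pow_le_one₀ (abs_nonneg x) h
    nlinarith [sq_nonneg (x ^ 4)]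
  · have h1 : |x| ^ k ≤ |x| ^ 8 := pow_le_pow_right₀ h hk
    have h2 : |x| ^ 8 = x ^ 8 := by
      rw [← abs_pow]; exact abs_of_nonneg (by positivity)
    nlinarith

lemma lv_abs_mul4 (w x y z : ℝ) :
    |w * x * (y * z)| ≤ (w ^ 4 + x ^ 4 + y ^ 4 + z ^ 4) / 4 := by
  have h1 : |w * x| ≤ (w ^ 2 + x ^ 2) / 2 := by
    rw [abs_mul]; nlinarith [sq_nonneg (|w| - |x|), sq_abs w, sq_abs x, abs_nonneg w, abs_nonneg x]
  have h2 : |y * z| ≤ (y ^ 2 + z ^ 2) / 2 := by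
    rw [abs_mul]; nlinarith [sq_nonneg (|y| - |z|), sq_abs y, sq_abs z, abs_nonneg y, abs_nonneg z]
  have h3 : |w * x * (y * z)| = |w * x| * |y * z| := abs_mul _ _
  have h4 : (w ^ 2 + x ^ 2) / 2 * ((y ^ 2 + z ^ 2) / 2) ≤ (w ^ 4 + x ^ 4 + y ^ 4 + z ^ 4) / 4 := by
    nlinarith [sq_nonneg (w ^ 2 - y ^ 2), sq_nonneg (w ^ 2 - z ^ 2), sq_nonneg (x ^ 2 - y ^ 2),
      sq_nonneg (x ^ 2 - z ^ 2)]
  calc |w * x * (y * z)| = |w * x| * |y * z| := h3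
    _ ≤ (w ^ 2 + x ^ 2) / 2 * ((y ^ 2 + z ^ 2) / 2) :=
        mul_le_mul h1 h2 (abs_nonneg _) (by positivity)
    _ ≤ _ := h4

lemma lv_abs_mul2 (x y : ℝ) : |x * y| ≤ (x ^ 2 + y ^ 2) / 2 := by
  rw [abs_mul]; nlinarith [sq_nonneg (|x| - |y|), sq_abs x, sq_abs y, abs_nonneg x, abs_nonneg y]

section Probab

variable {Ω : Type*} [MeasureSpace Ω] [IsProbabilityMeasure (ℙ : Measure Ω)]
  {a : ℕ → ℕ → Ω → ℝ}

lemma lv_identDistrib (ha_meas : ∀ i j, Measurable (a i j))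
    (ha_id : ∀ i j, Measure.map (a i j) ℙ = Measure.map (a 1 1) ℙ) (p q : ℕ) :
    IdentDistrib (a p q) (a 1 1) (ℙ : Measure Ω) (ℙ : Measure Ω) :=
  ⟨(ha_meas p q).aemeasurable, (ha_meas 1 1).aemeasurable, ha_id p q⟩

lemma lv_int_pow (ha_meas : ∀ i j, Measurable (a i j))
    (ha_id : ∀ i j, Measure.map (a i j) ℙ = Measure.map (a 1 1) ℙ)
    (ha_mom8 : Integrable (fun ω => (a 1 1 ω) ^ 8) (ℙ : Measure Ω))
    (p q : ℕ) {k : ℕ} (hk : k ≤ 8) :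
    Integrable (fun ω => (a p q ω) ^ k) (ℙ : Measure Ω) := by
  have hid : IdentDistrib (fun ω => (a p q ω) ^ k) (fun ω => (a 1 1 ω) ^ k)
      (ℙ : Measure Ω) (ℙ : Measure Ω) :=
    (lv_identDistrib ha_meas ha_id p q).comp (measurable_id.pow_const k)
  rw [hid.integrable_iff]
  refine Integrable.mono' ((integrable_const (1:ℝ)).add ha_mom8)
    (((ha_meas 1 1).pow_const k).aestronglyMeasurable) ?_
  exact Filter.Eventually.of_forall fun ω => by
    simpa using lv_abs_pow_le (a 1 1 ω) hk

lemma lv_integral_pow (ha_meas : ∀ i j, Measurable (a i j))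
    (ha_id : ∀ i j, Measure.map (a i j) ℙ = Measure.map (a 1 1) ℙ)
    (p q k : ℕ) :
    ∫ ω, (a p q ω) ^ k ∂(ℙ : Measure Ω) = ∫ ω, (a 1 1 ω) ^ k ∂(ℙ : Measure Ω) :=
  ((lv_identDistrib ha_meas ha_id p q).comp (measurable_id.pow_const k)).integral_eq

lemma lv_mean (ha_meas : ∀ i j, Measurable (a i j))
    (ha_id : ∀ i j, Measure.map (a i j) ℙ = Measure.map (a 1 1) ℙ)
    (ha_mean : ∫ ω, a 1 1 ω ∂(ℙ : Measure Ω) = 0) (p q : ℕ) :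
    ∫ ω, a p q ω ∂(ℙ : Measure Ω) = 0 := by
  rw [(lv_identDistrib ha_meas ha_id p q).integral_eq, ha_mean]

lemma lv_int_prod4 (ha_meas : ∀ i j, Measurable (a i j))
    (ha_id : ∀ i j, Measure.map (a i j) ℙ = Measure.map (a 1 1) ℙ)
    (ha_mom8 : Integrable (fun ω => (a 1 1 ω) ^ 8) (ℙ : Measure Ω))
    (p1 q1 p2 q2 p3 q3 p4 q4 : ℕ) :
    Integrable (fun ω => (a p1 q1 ω * a p2 q2 ω) * (a p3 q3 ω * a p4 q4 ω))
      (ℙ : Measure Ω) := by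
  have hint : Integrable (fun ω => ((a p1 q1 ω)^4 + (a p2 q2 ω)^4 + (a p3 q3 ω)^4
      + (a p4 q4 ω)^4) / 4) (ℙ : Measure Ω) := by
    refine Integrable.div_const ?_ 4
    exact (((lv_int_pow ha_meas ha_id ha_mom8 p1 q1 (by norm_num)).add
      (lv_int_pow ha_meas ha_id ha_mom8 p2 q2 (by norm_num))).add
      (lv_int_pow ha_meas ha_id ha_mom8 p3 q3 (by norm_num))).add
      (lv_int_pow ha_meas ha_id ha_mom8 p4 q4 (by norm_num))
  refine Integrable.mono' hint ?_ ?_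
  · exact (((ha_meas p1 q1).mul (ha_meas p2 q2)).mul
      ((ha_meas p3 q3).mul (ha_meas p4 q4))).aestronglyMeasurable
  · exact Filter.Eventually.of_forall fun ω => by
      simpa [abs_mul] using lv_abs_mul4 (a p1 q1 ω) (a p2 q2 ω) (a p3 q3 ω) (a p4 q4 ω)

lemma lv_int_prod2 (ha_meas : ∀ i j, Measurable (a i j))
    (ha_id : ∀ i j, Measure.map (a i j) ℙ = Measure.map (a 1 1) ℙ)
    (ha_mom8 : Integrable (fun ω => (a 1 1 ω) ^ 8) (ℙ : Measure Ω))
    (p1 q1 p2 q2 : ℕ) :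
    Integrable (fun ω => a p1 q1 ω * a p2 q2 ω) (ℙ : Measure Ω) := by
  have hint : Integrable (fun ω => ((a p1 q1 ω)^2 + (a p2 q2 ω)^2) / 2) (ℙ : Measure Ω) :=
    Integrable.div_const ((lv_int_pow ha_meas ha_id ha_mom8 p1 q1 (by norm_num)).add
      (lv_int_pow ha_meas ha_id ha_mom8 p2 q2 (by norm_num))) 2
  refine Integrable.mono' hint
    ((ha_meas p1 q1).mul (ha_meas p2 q2)).aestronglyMeasurable ?_
  exact Filter.Eventually.of_forall fun ω => by
    simpa [abs_mul] using lv_abs_mul2 (a p1 q1 ω) (a p2 q2 ω)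

lemma lv_int_sq_sq (ha_meas : ∀ i j, Measurable (a i j))
    (ha_id : ∀ i j, Measure.map (a i j) ℙ = Measure.map (a 1 1) ℙ)
    (ha_mom8 : Integrable (fun ω => (a 1 1 ω) ^ 8) (ℙ : Measure Ω))
    (p1 q1 p2 q2 : ℕ) :
    Integrable (fun ω => (a p1 q1 ω)^2 * (a p2 q2 ω)^2) (ℙ : Measure Ω) := by
  have := lv_int_prod4 ha_meas ha_id ha_mom8 p1 q1 p1 q1 p2 q2 p2 q2
  convert this using 2 with ω
  ring

lemma lv_integral_pair (ha_meas : ∀ i j, Measurable (a i j))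
    (h_indep : iIndepFun (fun p : ℕ × ℕ => a p.1 p.2) (ℙ : Measure Ω))
    (ha_id : ∀ i j, Measure.map (a i j) ℙ = Measure.map (a 1 1) ℙ)
    (ha_mean : ∫ ω, a 1 1 ω ∂(ℙ : Measure Ω) = 0)
    {p q p' q' : ℕ} (hne : (p, q) ≠ (p', q')) :
    ∫ ω, a p q ω * a p' q' ω ∂(ℙ : Measure Ω) = 0 := by
  have hind : IndepFun (a p q) (a p' q') (ℙ : Measure Ω) := h_indep.indepFun hne
  have := hind.integral_mul_eq_mul_integral (ha_meas p q).aestronglyMeasurable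
    (ha_meas p' q').aestronglyMeasurable
  rw [show (fun ω => a p q ω * a p' q' ω) = a p q * a p' q' from rfl, this,
    lv_mean ha_meas ha_id ha_mean p q, zero_mul]

lemma lv_integral_sq_pair (ha_meas : ∀ i j, Measurable (a i j))
    (h_indep : iIndepFun (fun p : ℕ × ℕ => a p.1 p.2) (ℙ : Measure Ω))
    (ha_id : ∀ i j, Measure.map (a i j) ℙ = Measure.map (a 1 1) ℙ)
    {p q p' q' : ℕ} (hne : (p, q) ≠ (p', q')) :
    ∫ ω, (a p q ω)^2 * (a p' q' ω)^2 ∂(ℙ : Measure Ω)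
      = (∫ ω, (a 1 1 ω)^2 ∂(ℙ : Measure Ω)) ^ 2 := by
  have hind : IndepFun (fun ω => (a p q ω)^2) (fun ω => (a p' q' ω)^2) (ℙ : Measure Ω) :=
    (h_indep.indepFun hne).comp (measurable_id.pow_const 2) (measurable_id.pow_const 2)
  have := hind.integral_mul_eq_mul_integral ((ha_meas p q).pow_const 2).aestronglyMeasurable
    ((ha_meas p' q').pow_const 2).aestronglyMeasurable
  rw [show (fun ω => (a p q ω)^2 * (a p' q' ω)^2)
      = (fun ω => (a p q ω)^2) * (fun ω => (a p' q' ω)^2) from rfl, this,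
    lv_integral_pow ha_meas ha_id p q 2, lv_integral_pow ha_meas ha_id p' q' 2, sq]

lemma lv_integral_quad (ha_meas : ∀ i j, Measurable (a i j))
    (h_indep : iIndepFun (fun p : ℕ × ℕ => a p.1 p.2) (ℙ : Measure Ω))
    (ha_id : ∀ i j, Measure.map (a i j) ℙ = Measure.map (a 1 1) ℙ)
    (ha_mean : ∫ ω, a 1 1 ω ∂(ℙ : Measure Ω) = 0)
    {i j k l : ℕ} (hij : i ≠ j) (hkl : k ≠ l) :
    ∫ ω, (a k i ω * a l i ω) * (a k j ω * a l j ω) ∂(ℙ : Measure Ω) = 0 := by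
  have hmeas : ∀ pr : ℕ × ℕ, Measurable ((fun p : ℕ × ℕ => a p.1 p.2) pr) :=
    fun pr => ha_meas pr.1 pr.2
  have hind : IndepFun ((fun p : ℕ × ℕ => a p.1 p.2) (k,i) * (fun p : ℕ × ℕ => a p.1 p.2) (l,i))
      ((fun p : ℕ × ℕ => a p.1 p.2) (k,j) * (fun p : ℕ × ℕ => a p.1 p.2) (l,j))
      (ℙ : Measure Ω) := by
    refine h_indep.indepFun_mul_mul hmeas (k,i) (l,i) (k,j) (l,j) ?_ ?_ ?_ ?_ <;>
      simp [Prod.ext_iff, hij]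
  have hae1 : AEStronglyMeasurable (a k i * a l i) (ℙ : Measure Ω) :=
    ((ha_meas k i).mul (ha_meas l i)).aestronglyMeasurable
  have hae2 : AEStronglyMeasurable (a k j * a l j) (ℙ : Measure Ω) :=
    ((ha_meas k j).mul (ha_meas l j)).aestronglyMeasurable
  have := hind.integral_mul_eq_mul_integral hae1 hae2
  rw [show (fun ω => (a k i ω * a l i ω) * (a k j ω * a l j ω))
      = (a k i * a l i) * (a k j * a l j) from rfl, this,
    show (a k i * a l i) = (fun ω => a k i ω * a l i ω) from rfl,
    lv_integral_pair ha_meas h_indep ha_id ha_mean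
      (show ((k,i) : ℕ × ℕ) ≠ (l,i) by simp [Prod.ext_iff, hkl]), zero_mul]



lemma lv_count (m : ℕ) (c : ℝ) :
    ∑ i ∈ Finset.range m, ∑ j ∈ Finset.range m, (if i = j then c else 0) = m * c := by
  have h : ∀ i ∈ Finset.range m, (∑ j ∈ Finset.range m, if i = j then c else 0) = c :=
    fun i hi => by rw [Finset.sum_ite_eq (Finset.range m) i fun _ => c, if_pos hi]
  rw [Finset.sum_congr rfl h, Finset.sum_const, Finset.card_range, nsmul_eq_mul]


lemma lv_EF (ha_meas : ∀ i j, Measurable (a i j))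
    (h_indep : iIndepFun (fun p : ℕ × ℕ => a p.1 p.2) (ℙ : Measure Ω))
    (ha_id : ∀ i j, Measure.map (a i j) ℙ = Measure.map (a 1 1) ℙ)
    (ha_mean : ∫ ω, a 1 1 ω ∂(ℙ : Measure Ω) = 0)
    (ha_mom8 : Integrable (fun ω => (a 1 1 ω) ^ 8) (ℙ : Measure Ω)) (m : ℕ) :
    Integrable (fun ω => lvGram (fun p q => a p q ω) m) (ℙ : Measure Ω) ∧
    ∫ ω, lvGram (fun p q => a p q ω) m ∂(ℙ : Measure Ω) ≤
      2 * (m:ℝ)^3 * ((∫ ω, (a 1 1 ω)^4 ∂(ℙ : Measure Ω))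
        + (∫ ω, (a 1 1 ω)^2 ∂(ℙ : Measure Ω))^2) := by
  classical
  set R := Finset.range m with hR
  set m2 := ∫ ω, (a 1 1 ω)^2 ∂(ℙ : Measure Ω) with hm2
  set m4 := ∫ ω, (a 1 1 ω)^4 ∂(ℙ : Measure Ω) with hm4
  set Mc := m4 + m2^2 with hMc
  have hm4nn : 0 ≤ m4 := integral_nonneg fun ω => by positivity
  have hMcnn : 0 ≤ Mc := add_nonneg hm4nn (sq_nonneg _)
  have expand : (fun ω => lvGram (fun p q => a p q ω) m)
      = fun ω => ∑ i ∈ R, ∑ j ∈ R, ∑ k ∈ R, ∑ l ∈ R,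
          (a k i ω * a l i ω) * (a k j ω * a l j ω) := by
    funext ω
    unfold lvGram
    refine Finset.sum_congr rfl fun i _ => Finset.sum_congr rfl fun j _ => ?_
    rw [sq, Finset.sum_mul_sum]
    exact Finset.sum_congr rfl fun k _ => Finset.sum_congr rfl fun l _ => by ring
  have I4 : ∀ i j k l : ℕ, Integrable
      (fun ω => (a k i ω * a l i ω) * (a k j ω * a l j ω)) (ℙ : Measure Ω) :=
    fun i j k l => lv_int_prod4 ha_meas ha_id ha_mom8 k i l i k j l j
  have I3 : ∀ i j k : ℕ, Integrable
      (fun ω => ∑ l ∈ R, (a k i ω * a l i ω) * (a k j ω * a l j ω)) (ℙ : Measure Ω) :=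
    fun i j k => integrable_finset_sum _ fun l _ => I4 i j k l
  have I2 : ∀ i j : ℕ, Integrable
      (fun ω => ∑ k ∈ R, ∑ l ∈ R, (a k i ω * a l i ω) * (a k j ω * a l j ω))
      (ℙ : Measure Ω) := fun i j => integrable_finset_sum _ fun k _ => I3 i j k
  have I1 : ∀ i : ℕ, Integrable
      (fun ω => ∑ j ∈ R, ∑ k ∈ R, ∑ l ∈ R, (a k i ω * a l i ω) * (a k j ω * a l j ω))
      (ℙ : Measure Ω) := fun i => integrable_finset_sum _ fun j _ => I2 i j
  constructor
  · rw [expand]; exact integrable_finset_sum _ fun i _ => I1 i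
  have swap : ∫ ω, (∑ i ∈ R, ∑ j ∈ R, ∑ k ∈ R, ∑ l ∈ R,
      (a k i ω * a l i ω) * (a k j ω * a l j ω)) ∂(ℙ : Measure Ω)
      = ∑ i ∈ R, ∑ j ∈ R, ∑ k ∈ R, ∑ l ∈ R,
        ∫ ω, (a k i ω * a l i ω) * (a k j ω * a l j ω) ∂(ℙ : Measure Ω) := by
    rw [integral_finset_sum _ fun i _ => I1 i]
    refine Finset.sum_congr rfl fun i _ => ?_
    rw [integral_finset_sum _ fun j _ => I2 i j]
    refine Finset.sum_congr rfl fun j _ => ?_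
    rw [integral_finset_sum _ fun k _ => I3 i j k]
    refine Finset.sum_congr rfl fun k _ => ?_
    rw [integral_finset_sum _ fun l _ => I4 i j k l]
  have hterm : ∀ i j k l : ℕ,
      ∫ ω, (a k i ω * a l i ω) * (a k j ω * a l j ω) ∂(ℙ : Measure Ω)
        ≤ if i = j ∨ k = l then Mc else 0 := by
    intro i j k l
    by_cases hij : i = j
    · subst hij
      by_cases hkl : k = l
      · subst hkl
        rw [if_pos (Or.inl rfl)]
        have he : (fun ω => (a k i ω * a k i ω) * (a k i ω * a k i ω))
            = fun ω => (a k i ω)^4 := by funext ω; ring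
        rw [he, lv_integral_pow ha_meas ha_id k i 4]
        exact le_add_of_nonneg_right (sq_nonneg _)
      · rw [if_pos (Or.inl rfl)]
        have he : (fun ω => (a k i ω * a l i ω) * (a k i ω * a l i ω))
            = fun ω => (a k i ω)^2 * (a l i ω)^2 := by funext ω; ring
        rw [he, lv_integral_sq_pair ha_meas h_indep ha_id
          (show ((k,i) : ℕ × ℕ) ≠ (l,i) by simp [Prod.ext_iff, hkl])]
        exact le_add_of_nonneg_left hm4nn
    · by_cases hkl : k = l
      · subst hkl
        rw [if_pos (Or.inr rfl)]
        have he : (fun ω => (a k i ω * a k i ω) * (a k j ω * a k j ω))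
            = fun ω => (a k i ω)^2 * (a k j ω)^2 := by funext ω; ring
        rw [he, lv_integral_sq_pair ha_meas h_indep ha_id
          (show ((k,i) : ℕ × ℕ) ≠ (k,j) by simp [Prod.ext_iff, hij])]
        exact le_add_of_nonneg_left hm4nn
      · rw [if_neg (by tauto), lv_integral_quad ha_meas h_indep ha_id ha_mean hij hkl]
  have count : ∑ i ∈ R, ∑ j ∈ R, ∑ k ∈ R, ∑ l ∈ R,
      (if i = j ∨ k = l then Mc else 0) ≤ 2 * (m:ℝ)^3 * Mc := by
    have split : ∀ i j k l : ℕ, (if i = j ∨ k = l then Mc else 0)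
        ≤ (if i = j then Mc else 0) + (if k = l then Mc else 0) := by
      intro i j k l
      by_cases hij : i = j
      · simp [hij]
        split <;> simpa using hMcnn
      · by_cases hkl : k = l <;> simp [hij, hkl, hMcnn]
    calc ∑ i ∈ R, ∑ j ∈ R, ∑ k ∈ R, ∑ l ∈ R, (if i = j ∨ k = l then Mc else 0)
        ≤ ∑ i ∈ R, ∑ j ∈ R, ∑ k ∈ R, ∑ l ∈ R,
            ((if i = j then Mc else 0) + (if k = l then Mc else 0)) := by
          refine Finset.sum_le_sum fun i _ => Finset.sum_le_sum fun j _ =>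
            Finset.sum_le_sum fun k _ => Finset.sum_le_sum fun l _ => split i j k l
      _ = (m:ℝ)^3 * Mc + (m:ℝ)^3 * Mc := by
          have e1 : ∑ i ∈ R, ∑ j ∈ R, ∑ k ∈ R, ∑ l ∈ R,
              ((if i = j then Mc else 0) + (if k = l then Mc else 0))
              = (∑ i ∈ R, ∑ j ∈ R, ∑ k ∈ R, ∑ l ∈ R, (if i = j then Mc else 0))
              + (∑ i ∈ R, ∑ j ∈ R, ∑ k ∈ R, ∑ l ∈ R, (if k = l then Mc else 0)) := by
            simp [Finset.sum_add_distrib]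
          rw [e1]
          have br1 : ∑ i ∈ R, ∑ j ∈ R, ∑ k ∈ R, ∑ l ∈ R, (if i = j then Mc else 0)
              = (m:ℝ)^3 * Mc := by
            have h3 : ∀ i j : ℕ, (∑ k ∈ R, ∑ l ∈ R, if i = j then Mc else 0)
                = (if i = j then (m:ℝ)*(m:ℝ)*Mc else 0) := by
              intro i j
              simp only [Finset.sum_const, hR, Finset.card_range, nsmul_eq_mul]
              split <;> ring
            rw [Finset.sum_congr rfl fun i _ => Finset.sum_congr rfl fun j _ => h3 i j, hR,
              lv_count m ((m:ℝ)*(m:ℝ)*Mc)]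
            ring
          have br2 : ∑ i ∈ R, ∑ j ∈ R, ∑ k ∈ R, ∑ l ∈ R, (if k = l then Mc else 0)
              = (m:ℝ)^3 * Mc := by
            have h3 : ∀ i j : ℕ, (∑ k ∈ R, ∑ l ∈ R, if k = l then Mc else 0)
                = (m:ℝ) * Mc := by
              intro i j
              rw [hR, lv_count m Mc]
            rw [Finset.sum_congr rfl fun i _ => Finset.sum_congr rfl fun j _ => h3 i j]
            simp only [Finset.sum_const, hR, Finset.card_range, nsmul_eq_mul]
            ring
          rw [br1, br2]
      _ = 2 * (m:ℝ)^3 * Mc := by ring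
  rw [expand, swap]
  calc ∑ i ∈ R, ∑ j ∈ R, ∑ k ∈ R, ∑ l ∈ R,
        ∫ ω, (a k i ω * a l i ω) * (a k j ω * a l j ω) ∂(ℙ : Measure Ω)
      ≤ ∑ i ∈ R, ∑ j ∈ R, ∑ k ∈ R, ∑ l ∈ R, (if i = j ∨ k = l then Mc else 0) := by
        refine Finset.sum_le_sum fun i _ => Finset.sum_le_sum fun j _ =>
          Finset.sum_le_sum fun k _ => Finset.sum_le_sum fun l _ => hterm i j k l
    _ ≤ 2 * (m:ℝ)^3 * Mc := count

lemma lv_ET (ha_meas : ∀ i j, Measurable (a i j))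
    (h_indep : iIndepFun (fun p : ℕ × ℕ => a p.1 p.2) (ℙ : Measure Ω))
    (ha_id : ∀ i j, Measure.map (a i j) ℙ = Measure.map (a 1 1) ℙ)
    (ha_mean : ∫ ω, a 1 1 ω ∂(ℙ : Measure Ω) = 0)
    (ha_mom8 : Integrable (fun ω => (a 1 1 ω) ^ 8) (ℙ : Measure Ω))
    (r : ℕ → ℝ) (B : ℝ) (hr : ∀ j, |r j| ≤ B) (i0 m : ℕ) :
    Integrable (fun ω => (∑ j ∈ Finset.range m, a i0 j ω * r j)^2) (ℙ : Measure Ω) ∧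
    ∫ ω, (∑ j ∈ Finset.range m, a i0 j ω * r j)^2 ∂(ℙ : Measure Ω) ≤
      (m:ℝ) * (B^2 * ∫ ω, (a 1 1 ω)^2 ∂(ℙ : Measure Ω)) := by
  classical
  set R := Finset.range m with hR
  set m2 := ∫ ω, (a 1 1 ω)^2 ∂(ℙ : Measure Ω) with hm2
  have hm2nn : 0 ≤ m2 := integral_nonneg fun ω => by positivity
  have expand : (fun ω => (∑ j ∈ R, a i0 j ω * r j)^2)
      = fun ω => ∑ j ∈ R, ∑ k ∈ R, (r j * r k) * (a i0 j ω * a i0 k ω) := by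
    funext ω
    rw [sq, Finset.sum_mul_sum]
    exact Finset.sum_congr rfl fun j _ => Finset.sum_congr rfl fun k _ => by ring
  have I2 : ∀ j k : ℕ, Integrable (fun ω => (r j * r k) * (a i0 j ω * a i0 k ω))
      (ℙ : Measure Ω) :=
    fun j k => (lv_int_prod2 ha_meas ha_id ha_mom8 i0 j i0 k).const_mul _
  have I1 : ∀ j : ℕ, Integrable (fun ω => ∑ k ∈ R, (r j * r k) * (a i0 j ω * a i0 k ω))
      (ℙ : Measure Ω) := fun j => integrable_finset_sum _ fun k _ => I2 j k
  constructor
  · rw [expand]; exact integrable_finset_sum _ fun j _ => I1 j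
  have swap : ∫ ω, (∑ j ∈ R, ∑ k ∈ R, (r j * r k) * (a i0 j ω * a i0 k ω)) ∂(ℙ : Measure Ω)
      = ∑ j ∈ R, ∑ k ∈ R, ∫ ω, (r j * r k) * (a i0 j ω * a i0 k ω) ∂(ℙ : Measure Ω) := by
    rw [integral_finset_sum _ fun j _ => I1 j]
    exact Finset.sum_congr rfl fun j _ => integral_finset_sum _ fun k _ => I2 j k
  have hterm : ∀ j k : ℕ, ∫ ω, (r j * r k) * (a i0 j ω * a i0 k ω) ∂(ℙ : Measure Ω)
      ≤ if j = k then B^2 * m2 else 0 := by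
    intro j k
    rw [integral_const_mul]
    by_cases hjk : j = k
    · subst hjk
      rw [if_pos rfl]
      have he : (fun ω => a i0 j ω * a i0 j ω) = fun ω => (a i0 j ω)^2 := by funext ω; ring
      rw [he, lv_integral_pow ha_meas ha_id i0 j 2]
      have h1 : r j * r j ≤ B^2 := by
        have := hr j
        nlinarith [abs_nonneg (r j), sq_abs (r j)]
      exact mul_le_mul_of_nonneg_right h1 hm2nn
    · rw [if_neg hjk, lv_integral_pair ha_meas h_indep ha_id ha_mean
        (show ((i0,j) : ℕ × ℕ) ≠ (i0,k) by simp [Prod.ext_iff, hjk]), mul_zero]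
  rw [expand, swap]
  calc ∑ j ∈ R, ∑ k ∈ R, ∫ ω, (r j * r k) * (a i0 j ω * a i0 k ω) ∂(ℙ : Measure Ω)
      ≤ ∑ j ∈ R, ∑ k ∈ R, (if j = k then B^2 * m2 else 0) :=
        Finset.sum_le_sum fun j _ => Finset.sum_le_sum fun k _ => hterm j k
    _ = (m:ℝ) * (B^2 * m2) := by rw [hR, lv_count m (B^2 * m2)]

lemma lv_ED (ha_meas : ∀ i j, Measurable (a i j))
    (ha_id : ∀ i j, Measure.map (a i j) ℙ = Measure.map (a 1 1) ℙ)
    (ha_mom8 : Integrable (fun ω => (a 1 1 ω) ^ 8) (ℙ : Measure Ω)) (i0 u v : ℕ) :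
    Integrable (fun ω => (∑ j ∈ Finset.Ico u v, |a i0 j ω|)^2) (ℙ : Measure Ω) ∧
    ∫ ω, (∑ j ∈ Finset.Ico u v, |a i0 j ω|)^2 ∂(ℙ : Measure Ω) ≤
      ((v - u : ℕ):ℝ)^2 * ∫ ω, (a 1 1 ω)^2 ∂(ℙ : Measure Ω) := by
  classical
  set R := Finset.Ico u v with hR
  set m2 := ∫ ω, (a 1 1 ω)^2 ∂(ℙ : Measure Ω) with hm2
  have expand : (fun ω => (∑ j ∈ R, |a i0 j ω|)^2)
      = fun ω => ∑ j ∈ R, ∑ k ∈ R, |a i0 j ω * a i0 k ω| := by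
    funext ω
    rw [sq, Finset.sum_mul_sum]
    exact Finset.sum_congr rfl fun j _ => Finset.sum_congr rfl fun k _ => (abs_mul _ _).symm
  have I2 : ∀ j k : ℕ, Integrable (fun ω => |a i0 j ω * a i0 k ω|) (ℙ : Measure Ω) :=
    fun j k => (lv_int_prod2 ha_meas ha_id ha_mom8 i0 j i0 k).abs
  have I1 : ∀ j : ℕ, Integrable (fun ω => ∑ k ∈ R, |a i0 j ω * a i0 k ω|) (ℙ : Measure Ω) :=
    fun j => integrable_finset_sum _ fun k _ => I2 j k
  constructor
  · rw [expand]; exact integrable_finset_sum _ fun j _ => I1 j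
  have swap : ∫ ω, (∑ j ∈ R, ∑ k ∈ R, |a i0 j ω * a i0 k ω|) ∂(ℙ : Measure Ω)
      = ∑ j ∈ R, ∑ k ∈ R, ∫ ω, |a i0 j ω * a i0 k ω| ∂(ℙ : Measure Ω) := by
    rw [integral_finset_sum _ fun j _ => I1 j]
    exact Finset.sum_congr rfl fun j _ => integral_finset_sum _ fun k _ => I2 j k
  have hterm : ∀ j k : ℕ, ∫ ω, |a i0 j ω * a i0 k ω| ∂(ℙ : Measure Ω) ≤ m2 := by
    intro j k
    have hbd : Integrable (fun ω => ((a i0 j ω)^2 + (a i0 k ω)^2)/2) (ℙ : Measure Ω) :=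
      Integrable.div_const ((lv_int_pow ha_meas ha_id ha_mom8 i0 j (by norm_num)).add
        (lv_int_pow ha_meas ha_id ha_mom8 i0 k (by norm_num))) 2
    have h1 : ∫ ω, |a i0 j ω * a i0 k ω| ∂(ℙ : Measure Ω)
        ≤ ∫ ω, ((a i0 j ω)^2 + (a i0 k ω)^2)/2 ∂(ℙ : Measure Ω) :=
      integral_mono (I2 j k) hbd fun ω => lv_abs_mul2 _ _
    have h2 : ∫ ω, ((a i0 j ω)^2 + (a i0 k ω)^2)/2 ∂(ℙ : Measure Ω) = m2 := by
      rw [integral_div, integral_add (lv_int_pow ha_meas ha_id ha_mom8 i0 j (by norm_num))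
        (lv_int_pow ha_meas ha_id ha_mom8 i0 k (by norm_num)),
        lv_integral_pow ha_meas ha_id i0 j 2, lv_integral_pow ha_meas ha_id i0 k 2]
      ring
    linarith
  rw [expand, swap]
  calc ∑ j ∈ R, ∑ k ∈ R, ∫ ω, |a i0 j ω * a i0 k ω| ∂(ℙ : Measure Ω)
      ≤ ∑ j ∈ R, ∑ k ∈ R, m2 :=
        Finset.sum_le_sum fun j _ => Finset.sum_le_sum fun k _ => hterm j k
    _ = ((v - u : ℕ):ℝ)^2 * m2 := by
        simp [hR, Finset.sum_const, Nat.card_Ico, nsmul_eq_mul]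
        ring

lemma lv_EQ (ha_meas : ∀ i j, Measurable (a i j))
    (h_indep : iIndepFun (fun p : ℕ × ℕ => a p.1 p.2) (ℙ : Measure Ω))
    (ha_id : ∀ i j, Measure.map (a i j) ℙ = Measure.map (a 1 1) ℙ)
    (ha_mom8 : Integrable (fun ω => (a 1 1 ω) ^ 8) (ℙ : Measure Ω)) (i0 m : ℕ) :
    Integrable (fun ω => (∑ j ∈ Finset.range m,
        ((a i0 j ω)^2 - ∫ ω', (a 1 1 ω')^2 ∂(ℙ : Measure Ω)))^2) (ℙ : Measure Ω) ∧
    ∫ ω, (∑ j ∈ Finset.range m,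
        ((a i0 j ω)^2 - ∫ ω', (a 1 1 ω')^2 ∂(ℙ : Measure Ω)))^2 ∂(ℙ : Measure Ω) ≤
      (m:ℝ) * ((∫ ω, (a 1 1 ω)^4 ∂(ℙ : Measure Ω))
        + (∫ ω, (a 1 1 ω)^2 ∂(ℙ : Measure Ω))^2) := by
  classical
  set R := Finset.range m with hR
  set m2 := ∫ ω, (a 1 1 ω)^2 ∂(ℙ : Measure Ω) with hm2
  set m4 := ∫ ω, (a 1 1 ω)^4 ∂(ℙ : Measure Ω) with hm4
  set Mc := m4 + m2^2 with hMc
  have expand : (fun ω => (∑ j ∈ R, ((a i0 j ω)^2 - m2))^2)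
      = fun ω => ∑ j ∈ R, ∑ k ∈ R,
          ((a i0 j ω)^2 * (a i0 k ω)^2 - m2 * (a i0 j ω)^2 - m2 * (a i0 k ω)^2 + m2^2) := by
    funext ω
    rw [sq, Finset.sum_mul_sum]
    exact Finset.sum_congr rfl fun j _ => Finset.sum_congr rfl fun k _ => by ring
  have I2 : ∀ j k : ℕ, Integrable (fun ω =>
      (a i0 j ω)^2 * (a i0 k ω)^2 - m2 * (a i0 j ω)^2 - m2 * (a i0 k ω)^2 + m2^2)
      (ℙ : Measure Ω) := by
    intro j k
    exact (((lv_int_sq_sq ha_meas ha_id ha_mom8 i0 j i0 k).sub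
      ((lv_int_pow ha_meas ha_id ha_mom8 i0 j (by norm_num)).const_mul m2)).sub
      ((lv_int_pow ha_meas ha_id ha_mom8 i0 k (by norm_num)).const_mul m2)).add
      (integrable_const _)
  have I1 : ∀ j : ℕ, Integrable (fun ω => ∑ k ∈ R,
      ((a i0 j ω)^2 * (a i0 k ω)^2 - m2 * (a i0 j ω)^2 - m2 * (a i0 k ω)^2 + m2^2))
      (ℙ : Measure Ω) := fun j => integrable_finset_sum _ fun k _ => I2 j k
  constructor
  · rw [expand]; exact integrable_finset_sum _ fun j _ => I1 j
  have hval : ∀ j k : ℕ, ∫ ω,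
      ((a i0 j ω)^2 * (a i0 k ω)^2 - m2 * (a i0 j ω)^2 - m2 * (a i0 k ω)^2 + m2^2)
        ∂(ℙ : Measure Ω)
      = (∫ ω, (a i0 j ω)^2 * (a i0 k ω)^2 ∂(ℙ : Measure Ω)) - m2^2 := by
    intro j k
    have Ia : Integrable (fun ω => (a i0 j ω)^2 * (a i0 k ω)^2) (ℙ : Measure Ω) :=
      lv_int_sq_sq ha_meas ha_id ha_mom8 i0 j i0 k
    have Ib : Integrable (fun ω => m2 * (a i0 j ω)^2) (ℙ : Measure Ω) :=
      (lv_int_pow ha_meas ha_id ha_mom8 i0 j (show 2 ≤ 8 by norm_num)).const_mul m2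
    have Ic : Integrable (fun ω => m2 * (a i0 k ω)^2) (ℙ : Measure Ω) :=
      (lv_int_pow ha_meas ha_id ha_mom8 i0 k (show 2 ≤ 8 by norm_num)).const_mul m2
    have Iab : Integrable (fun ω => (a i0 j ω)^2 * (a i0 k ω)^2 - m2 * (a i0 j ω)^2)
        (ℙ : Measure Ω) := Ia.sub Ib
    have Iabc : Integrable
        (fun ω => (a i0 j ω)^2 * (a i0 k ω)^2 - m2 * (a i0 j ω)^2 - m2 * (a i0 k ω)^2)
        (ℙ : Measure Ω) := Iab.sub Ic
    have e1 : ∫ ω, ((a i0 j ω)^2 * (a i0 k ω)^2 - m2 * (a i0 j ω)^2 - m2 * (a i0 k ω)^2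
        + m2^2) ∂(ℙ : Measure Ω)
        = (∫ ω, ((a i0 j ω)^2 * (a i0 k ω)^2 - m2 * (a i0 j ω)^2 - m2 * (a i0 k ω)^2)
            ∂(ℙ : Measure Ω)) + ∫ _, m2^2 ∂(ℙ : Measure Ω) :=
      integral_add Iabc (integrable_const _)
    have e2 : ∫ ω, ((a i0 j ω)^2 * (a i0 k ω)^2 - m2 * (a i0 j ω)^2 - m2 * (a i0 k ω)^2)
        ∂(ℙ : Measure Ω)
        = (∫ ω, ((a i0 j ω)^2 * (a i0 k ω)^2 - m2 * (a i0 j ω)^2) ∂(ℙ : Measure Ω))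
          - ∫ ω, m2 * (a i0 k ω)^2 ∂(ℙ : Measure Ω) := integral_sub Iab Ic
    have e3 : ∫ ω, ((a i0 j ω)^2 * (a i0 k ω)^2 - m2 * (a i0 j ω)^2) ∂(ℙ : Measure Ω)
        = (∫ ω, (a i0 j ω)^2 * (a i0 k ω)^2 ∂(ℙ : Measure Ω))
          - ∫ ω, m2 * (a i0 j ω)^2 ∂(ℙ : Measure Ω) := integral_sub Ia Ib
    have e4 : ∫ ω, m2 * (a i0 j ω)^2 ∂(ℙ : Measure Ω) = m2 * m2 := by
      rw [integral_const_mul, lv_integral_pow ha_meas ha_id i0 j 2]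
    have e5 : ∫ ω, m2 * (a i0 k ω)^2 ∂(ℙ : Measure Ω) = m2 * m2 := by
      rw [integral_const_mul, lv_integral_pow ha_meas ha_id i0 k 2]
    have e6 : ∫ _, m2^2 ∂(ℙ : Measure Ω) = m2^2 := by simp
    rw [e1, e2, e3, e4, e5, e6]
    ring
  have hterm : ∀ j k : ℕ, ∫ ω,
      ((a i0 j ω)^2 * (a i0 k ω)^2 - m2 * (a i0 j ω)^2 - m2 * (a i0 k ω)^2 + m2^2)
        ∂(ℙ : Measure Ω) ≤ if j = k then Mc else 0 := by
    intro j k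
    rw [hval j k]
    by_cases hjk : j = k
    · subst hjk
      rw [if_pos rfl]
      have he : (fun ω => (a i0 j ω)^2 * (a i0 j ω)^2) = fun ω => (a i0 j ω)^4 := by
        funext ω; ring
      rw [he, lv_integral_pow ha_meas ha_id i0 j 4]
      have : (0:ℝ) ≤ m2^2 := sq_nonneg _
      rw [hMc]; linarith
    · rw [if_neg hjk, lv_integral_sq_pair ha_meas h_indep ha_id
        (show ((i0,j) : ℕ × ℕ) ≠ (i0,k) by simp [Prod.ext_iff, hjk])]
      simp [← hm2]
  rw [expand]
  rw [integral_finset_sum _ fun j _ => I1 j]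
  calc ∑ j ∈ R, ∫ ω, (∑ k ∈ R,
        ((a i0 j ω)^2 * (a i0 k ω)^2 - m2 * (a i0 j ω)^2 - m2 * (a i0 k ω)^2 + m2^2))
        ∂(ℙ : Measure Ω)
      = ∑ j ∈ R, ∑ k ∈ R, ∫ ω,
        ((a i0 j ω)^2 * (a i0 k ω)^2 - m2 * (a i0 j ω)^2 - m2 * (a i0 k ω)^2 + m2^2)
        ∂(ℙ : Measure Ω) :=
        Finset.sum_congr rfl fun j _ => integral_finset_sum _ fun k _ => I2 j k
    _ ≤ ∑ j ∈ R, ∑ k ∈ R, (if j = k then Mc else 0) :=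
        Finset.sum_le_sum fun j _ => Finset.sum_le_sum fun k _ => hterm j k
    _ = (m:ℝ) * Mc := by rw [hR, lv_count m Mc]


end Probab

lemma lv_det (θ C : ℝ) (hθ : θ < 0) (hC : 0 < C) (b : ℕ → ℕ → ℝ) (r : ℕ → ℝ)
    {B : ℝ} (hB : 0 ≤ B) (hr : ∀ j, |r j| ≤ B)
    {S : ℕ} (hS : 1 ≤ S) {i0 : ℕ} (hi0 : i0 < S)
    (x : Fin S → ℝ)
    (heq : ∀ p : Fin S, θ * x p + (C * S)⁻¹ * ∑ q : Fin S, b p q * x q = - r p)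
    {G : ℝ} (hG : 0 ≤ G)
    (hop : ∀ v : Fin S → ℝ,
      ∑ p : Fin S, (∑ q : Fin S, b p q * v q)^2 ≤ G * ∑ q : Fin S, (v q)^2)
    (hEE : (C * S)⁻¹^2 * G ≤ θ^2/4)
    {QQ : ℝ} (hQ : ∑ q : Fin S, (b i0 q)^2 ≤ QQ) :
    |x ⟨i0, hi0⟩ - (- r i0/θ)| ≤
      θ⁻¹^2 * |(C * S)⁻¹ * ∑ q : Fin S, b i0 q * r q|
      + θ⁻¹^2 * Real.sqrt ((C * S)⁻¹^2 * QQ * ((C * S)⁻¹^2 * G * (4*B^2*S/θ^2))) := by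
  have hθ0 : θ ≠ 0 := ne_of_lt hθ
  have hθ2 : 0 < θ^2 := by positivity
  set d : ℝ := (C * S)⁻¹ with hd
  have hd0 : 0 ≤ d := by positivity
  set A : Fin S → ℝ := fun p => ∑ q : Fin S, b p q * x q with hA
  set W : ℝ := ∑ p : Fin S, (x p)^2 with hW
  have hW0 : 0 ≤ W := Finset.sum_nonneg fun _ _ => sq_nonneg _
  set EE : ℝ := d^2 * G with hEE'
  have hEE0 : 0 ≤ EE := by positivity
  set QQ' : ℝ := ∑ q : Fin S, (b i0 q)^2 with hQQ'
  have hQQ'0 : 0 ≤ QQ' := Finset.sum_nonneg fun _ _ => sq_nonneg _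
  have hQQ0 : 0 ≤ QQ := le_trans hQQ'0 hQ
  -- bound on W
  have hxp : ∀ p : Fin S, θ * x p = -(r p) - d * A p := fun p => by
    have := heq p; rw [hA]; simp only []; linarith
  have hT : ∑ p : Fin S, (d * A p)^2 ≤ EE * W := by
    have e1 : ∑ p : Fin S, (d * A p)^2 = d^2 * ∑ p : Fin S, (A p)^2 := by
      rw [Finset.mul_sum]; exact Finset.sum_congr rfl fun p _ => by ring
    rw [e1, hEE']
    calc d^2 * ∑ p : Fin S, (A p)^2 ≤ d^2 * (G * W) := by
          refine mul_le_mul_of_nonneg_left ?_ (sq_nonneg d)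
          exact hop x
      _ = d^2 * G * W := by ring
  have hsum_r : ∑ p : Fin S, (r (p:ℕ))^2 ≤ B^2 * S := by
    calc ∑ p : Fin S, (r (p:ℕ))^2 ≤ ∑ _p : Fin S, B^2 :=
          Finset.sum_le_sum fun p _ => by
            nlinarith [hr (p:ℕ), abs_nonneg (r (p:ℕ)), sq_abs (r (p:ℕ))]
      _ = B^2 * S := by simp [Finset.sum_const, Finset.card_univ]; ring
  have hWb : W ≤ 4*B^2*S/θ^2 := by
    have hW2 : θ^2 * W = ∑ p : Fin S, (r (p:ℕ) + d * A p)^2 := by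
      rw [hW, Finset.mul_sum]
      refine Finset.sum_congr rfl fun p _ => ?_
      have h1 : θ^2 * (x p)^2 = (θ * x p)^2 := by ring
      rw [h1, hxp p]; ring
    have h2 : ∑ p : Fin S, (r (p:ℕ) + d * A p)^2
        ≤ 2*(B^2*S) + 2*(EE*W) := by
      calc ∑ p : Fin S, (r (p:ℕ) + d * A p)^2
          ≤ ∑ p : Fin S, (2*(r (p:ℕ))^2 + 2*(d * A p)^2) :=
            Finset.sum_le_sum fun p _ => by nlinarith [sq_nonneg (r (p:ℕ) - d * A p)]
        _ = 2*(∑ p : Fin S, (r (p:ℕ))^2) + 2*(∑ p : Fin S, (d * A p)^2) := by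
            rw [Finset.sum_add_distrib, ← Finset.mul_sum, ← Finset.mul_sum]
        _ ≤ 2*(B^2*S) + 2*(EE*W) := by
            have := hT; have := hsum_r; linarith
    have h3 : EE * W ≤ θ^2/4 * W := mul_le_mul_of_nonneg_right hEE hW0
    rw [le_div_iff₀ hθ2]
    nlinarith [hW2, h2, h3]
  -- the coordinate equation
  set pi : Fin S := ⟨i0, hi0⟩ with hpi
  have hxq : ∀ q : Fin S, x q = -θ⁻¹ * (r (q:ℕ) + d * A q) := by
    intro q
    have h1 := hxp q
    field_simp
    linarith
  have hApi : d * A pi = -θ⁻¹ * (d * ∑ q : Fin S, b i0 q * r q)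
      - θ⁻¹ * (d * ∑ q : Fin S, b i0 q * (d * A q)) := by
    have e : A pi = ∑ q : Fin S, (-θ⁻¹ * (b i0 q * r q) + -θ⁻¹ * (b i0 q * (d * A q))) := by
      rw [hA]
      refine Finset.sum_congr rfl fun q _ => ?_
      rw [hxq q]; ring
    rw [e, Finset.sum_add_distrib, ← Finset.mul_sum, ← Finset.mul_sum]
    ring
  -- bound the second-order term
  have hZ2 : (d * ∑ q : Fin S, b i0 q * (d * A q))^2
      ≤ d^2 * QQ * (EE * (4*B^2*S/θ^2)) := by
    have cs : (∑ q : Fin S, b i0 q * (d * A q))^2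
        ≤ QQ' * ∑ q : Fin S, (d * A q)^2 :=
      Finset.sum_mul_sq_le_sq_mul_sq Finset.univ _ _
    have hEW : EE * W ≤ EE * (4*B^2*S/θ^2) := mul_le_mul_of_nonneg_left hWb hEE0
    have h4 : (∑ q : Fin S, (d * A q)^2) ≤ EE * (4*B^2*S/θ^2) := le_trans hT hEW
    have h5 : (∑ q : Fin S, b i0 q * (d * A q))^2 ≤ QQ * (EE * (4*B^2*S/θ^2)) := by
      calc (∑ q : Fin S, b i0 q * (d * A q))^2 ≤ QQ' * ∑ q : Fin S, (d * A q)^2 := cs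
        _ ≤ QQ * (EE * (4*B^2*S/θ^2)) := by
            refine mul_le_mul hQ h4 (Finset.sum_nonneg fun _ _ => sq_nonneg _) hQQ0
    calc (d * ∑ q : Fin S, b i0 q * (d * A q))^2
        = d^2 * (∑ q : Fin S, b i0 q * (d * A q))^2 := by ring
      _ ≤ d^2 * (QQ * (EE * (4*B^2*S/θ^2))) :=
          mul_le_mul_of_nonneg_left h5 (sq_nonneg d)
      _ = d^2 * QQ * (EE * (4*B^2*S/θ^2)) := by ring
  have hZabs : |d * ∑ q : Fin S, b i0 q * (d * A q)|
      ≤ Real.sqrt (d^2 * QQ * (EE * (4*B^2*S/θ^2))) := by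
    rw [← Real.sqrt_sq_eq_abs]
    exact Real.sqrt_le_sqrt hZ2
  -- the coordinate deviation
  have hdev : x pi - (- r i0/θ) = -θ⁻¹ * (d * A pi) := by
    have h1 : θ * x pi = -(r i0) - d * A pi := by
      have := hxp pi
      simpa using this
    have h2 : x pi = θ⁻¹ * (θ * x pi) := by field_simp
    rw [h2, h1]
    field_simp
    ring
  rw [hdev, hApi]
  have expand : -θ⁻¹ * (-θ⁻¹ * (d * ∑ q : Fin S, b i0 q * r q)
      - θ⁻¹ * (d * ∑ q : Fin S, b i0 q * (d * A q)))
      = θ⁻¹^2 * (d * ∑ q : Fin S, b i0 q * r q)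
        + θ⁻¹^2 * (d * ∑ q : Fin S, b i0 q * (d * A q)) := by ring
  rw [expand]
  calc |θ⁻¹^2 * (d * ∑ q : Fin S, b i0 q * r q)
      + θ⁻¹^2 * (d * ∑ q : Fin S, b i0 q * (d * A q))|
      ≤ |θ⁻¹^2 * (d * ∑ q : Fin S, b i0 q * r q)|
        + |θ⁻¹^2 * (d * ∑ q : Fin S, b i0 q * (d * A q))| := abs_add_le _ _
    _ ≤ θ⁻¹^2 * |d * ∑ q : Fin S, b i0 q * r q|
        + θ⁻¹^2 * Real.sqrt (d^2 * QQ * (EE * (4*B^2*S/θ^2))) := by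
        have e1 : |θ⁻¹^2 * (d * ∑ q : Fin S, b i0 q * r q)|
            = θ⁻¹^2 * |d * ∑ q : Fin S, b i0 q * r q| := by
          rw [abs_mul, abs_of_nonneg (sq_nonneg θ⁻¹)]
        have e2 : |θ⁻¹^2 * (d * ∑ q : Fin S, b i0 q * (d * A q))|
            = θ⁻¹^2 * |d * ∑ q : Fin S, b i0 q * (d * A q)| := by
          rw [abs_mul, abs_of_nonneg (sq_nonneg θ⁻¹)]
        rw [e1, e2]
        exact add_le_add le_rfl (mul_le_mul_of_nonneg_left hZabs (sq_nonneg _))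
    _ = θ⁻¹^2 * |d * ∑ q : Fin S, b i0 q * r q|
        + θ⁻¹^2 * Real.sqrt (d^2 * QQ * (d^2 * G * (4*B^2*S/θ^2))) := by rw [hEE']

lemma lv_sqrt_u (c T : ℝ) (hc : 0 ≤ c) : Real.sqrt (c^2 * T^2) = c * |T| := by
  rw [Real.sqrt_mul (sq_nonneg c), Real.sqrt_sq hc, Real.sqrt_sq_eq_abs]

lemma lvGram_measurable {Ω : Type*} [MeasurableSpace Ω] {a : ℕ → ℕ → Ω → ℝ}
    (ha : ∀ i j, Measurable (a i j)) (m : ℕ) :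
    Measurable (fun ω => lvGram (fun p q => a p q ω) m) := by
  unfold lvGram
  exact Finset.measurable_sum _ fun i _ => Finset.measurable_sum _ fun j _ =>
    ((Finset.measurable_sum _ fun k _ => (ha k i).mul (ha k j)).pow_const 2)

lemma lv_tendsto_sqrt : Filter.Tendsto Nat.sqrt Filter.atTop Filter.atTop := by
  refine Filter.tendsto_atTop_atTop.mpr fun b => ⟨b*b, fun n hn => ?_⟩
  calc b = Nat.sqrt (b*b) := (Nat.sqrt_eq b).symm
    _ ≤ Nat.sqrt n := Nat.sqrt_le_sqrt hn


/-- The random matrix `θ I + (CS)⁻¹ A^{(S)}` of the weak-interaction random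
Lotka–Volterra model (δ = 1). -/
noncomputable def weakMatrix {Ω : Type*} (a : ℕ → ℕ → Ω → ℝ) (θ C : ℝ) (S : ℕ) (ω : Ω) :
    Matrix (Fin S) (Fin S) ℝ :=
  θ • (1 : Matrix (Fin S) (Fin S) ℝ) +
    ((C * S)⁻¹) • Matrix.of (fun i j : Fin S => a i j ω)

/-- The random equilibrium `x*^{(S)} = -(θ I + (CS)⁻¹ A^{(S)})⁻¹ r^{(S)}` (with deterministic
growth rates `r`), extended by `0` to indices `i ≥ S`. -/
noncomputable def weakEquilibrium {Ω : Type*} (a : ℕ → ℕ → Ω → ℝ) (r : ℕ → ℝ)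
    (θ C : ℝ) (S : ℕ) (ω : Ω) : ℕ → ℝ := fun i =>
  if h : i < S then
    (-((weakMatrix a θ C S ω)⁻¹ *ᵥ fun j : Fin S => r j)) ⟨i, h⟩
  else 0


set_option maxHeartbeats 4000000 in
/-- In the weak-interaction random model with centred interactions
(`μ_A = 0`), for every fixed index `i` the equilibrium coordinate `x*^{(S)}_i` converges
almost surely, as `S → ∞`, to `r_i/|θ|`.  In particular, if `r_i > 0` for all `i`, then the
limiting equilibrium is feasible (all limits are strictly positive). -/
theorem weak_equilibrium_tendsto_ae
    {Ω : Type*} [MeasureSpace Ω] [IsProbabilityMeasure (ℙ : Measure Ω)]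
    (a : ℕ → ℕ → Ω → ℝ) (r : ℕ → ℝ) (θ C : ℝ)
    (hθ : θ < 0) (hC_pos : 0 < C) (hC_le : C ≤ 1)
    (ha_meas : ∀ i j, Measurable (a i j))
    -- i.i.d. entries
    (h_indep : iIndepFun (fun p : ℕ × ℕ => a p.1 p.2) ℙ)
    (ha_id : ∀ i j, Measure.map (a i j) ℙ = Measure.map (a 1 1) ℙ)
    -- centred entries with finite eighth moment
    (ha_mean : ∫ ω, a 1 1 ω ∂ℙ = 0)
    (ha_mom8 : Integrable (fun ω => (a 1 1 ω) ^ 8) ℙ)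
    -- bounded deterministic growth rates
    (hr_bdd : ∃ B : ℝ, ∀ i, |r i| ≤ B)
    -- almost sure invertibility of `θ I + (CS)⁻¹ A^{(S)}`
    (h_inv : ∀ S : ℕ, ∀ᵐ ω ∂ℙ, IsUnit (weakMatrix a θ C S ω).det) :
    (∀ i : ℕ, ∀ᵐ ω ∂ℙ,
      Tendsto (fun S : ℕ => weakEquilibrium a r θ C S ω i) atTop (nhds (r i / |θ|))) ∧
    ((∀ i, 0 < r i) → ∀ i, 0 < r i / |θ|) := by
  obtain ⟨B0, hB0⟩ := hr_bdd
  set B : ℝ := max B0 0 with hB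
  have hBnn : 0 ≤ B := le_max_right _ _
  have hrB : ∀ j, |r j| ≤ B := fun j => le_trans (hB0 j) (le_max_left _ _)
  have habs : |θ| = -θ := abs_of_neg hθ
  have hθ0 : θ ≠ 0 := ne_of_lt hθ
  refine ⟨?_, fun h i => div_pos (h i) (abs_pos.mpr hθ0)⟩
  intro i0
  set m2 := ∫ ω, (a 1 1 ω)^2 ∂(ℙ : Measure Ω) with hm2
  set m4 := ∫ ω, (a 1 1 ω)^4 ∂(ℙ : Measure Ω) with hm4
  have hm2nn : 0 ≤ m2 := integral_nonneg fun ω => by positivity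
  have hm4nn : 0 ≤ m4 := integral_nonneg fun ω => by positivity
  set Mc := m4 + m2^2 with hMc
  have hMcnn : 0 ≤ Mc := add_nonneg hm4nn (sq_nonneg _)
  have hcsum : Summable (fun n : ℕ => ((n:ℝ)^2)⁻¹) :=
    Real.summable_nat_pow_inv.mpr one_lt_two
  -- the four auxiliary random sequences
  set u1 : ℕ → Ω → ℝ := fun n ω =>
    lvGram (fun p q => a p q ω) (n^2) * (((n:ℝ)^8)⁻¹) with hu1
  set u2 : ℕ → Ω → ℝ := fun n ω =>
    (((n:ℝ)^2)⁻¹)^2 * (∑ j ∈ Finset.range (n^2), a i0 j ω * r j)^2 with hu2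
  set u3 : ℕ → Ω → ℝ := fun n ω =>
    (((n:ℝ)^2)⁻¹)^2 * (∑ j ∈ Finset.Ico (n^2) ((n+1)^2), |a i0 j ω|)^2 with hu3
  set u4 : ℕ → Ω → ℝ := fun n ω =>
    (((n:ℝ)^2)⁻¹)^2 * (∑ j ∈ Finset.range (n^2), ((a i0 j ω)^2 - m2))^2 with hu4
  -- a.s. convergence of the four sequences
  have E1 : ∀ᵐ ω ∂(ℙ : Measure Ω), Tendsto (fun n => u1 n ω) atTop (nhds 0) := by
    refine lv_ae_tendsto_zero (fun n => (lvGram_measurable ha_meas _).mul_const _)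
      (fun n ω => mul_nonneg (lvGram_nonneg _ _) (by positivity))
      (fun n => ((lv_EF ha_meas h_indep ha_id ha_mean ha_mom8 (n^2)).1).mul_const _)
      (hcsum.mul_left (2*Mc)) ?_
    intro n
    have e : ∫ ω, u1 n ω ∂(ℙ : Measure Ω)
        = (∫ ω, lvGram (fun p q => a p q ω) (n^2) ∂(ℙ : Measure Ω)) * (((n:ℝ)^8)⁻¹) :=
      integral_mul_const _ _
    rcases Nat.eq_zero_or_pos n with hn | hn
    · subst hn
      rw [e]
      simp
    · have hne : ((n:ℝ)) ≠ 0 := Nat.cast_ne_zero.mpr hn.ne'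
      have hEF := (lv_EF ha_meas h_indep ha_id ha_mean ha_mom8 (n^2)).2
      rw [← hm2, ← hm4, ← hMc] at hEF
      rw [e]
      calc (∫ ω, lvGram (fun p q => a p q ω) (n^2) ∂(ℙ : Measure Ω)) * (((n:ℝ)^8)⁻¹)
          ≤ (2 * ((n^2 : ℕ):ℝ)^3 * Mc) * (((n:ℝ)^8)⁻¹) :=
            mul_le_mul_of_nonneg_right hEF (by positivity)
        _ = 2*Mc * ((n:ℝ)^2)⁻¹ := by push_cast; field_simp
  have E2 : ∀ᵐ ω ∂(ℙ : Measure Ω), Tendsto (fun n => u2 n ω) atTop (nhds 0) := by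
    refine lv_ae_tendsto_zero
      (fun n => ((Finset.measurable_sum _ fun j _ =>
        (ha_meas i0 j).mul_const (r j)).pow_const 2).const_mul _)
      (fun n ω => mul_nonneg (by positivity) (sq_nonneg _))
      (fun n => ((lv_ET ha_meas h_indep ha_id ha_mean ha_mom8 r B hrB i0 (n^2)).1).const_mul _)
      (hcsum.mul_left (B^2*m2)) ?_
    intro n
    have e : ∫ ω, u2 n ω ∂(ℙ : Measure Ω)
        = (((n:ℝ)^2)⁻¹)^2 * ∫ ω, (∑ j ∈ Finset.range (n^2), a i0 j ω * r j)^2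
            ∂(ℙ : Measure Ω) := integral_const_mul _ _
    rcases Nat.eq_zero_or_pos n with hn | hn
    · subst hn; rw [e]; simp
    · have hne : ((n:ℝ)) ≠ 0 := Nat.cast_ne_zero.mpr hn.ne'
      have hET := (lv_ET ha_meas h_indep ha_id ha_mean ha_mom8 r B hrB i0 (n^2)).2
      rw [← hm2] at hET
      rw [e]
      calc (((n:ℝ)^2)⁻¹)^2 * ∫ ω, (∑ j ∈ Finset.range (n^2), a i0 j ω * r j)^2
            ∂(ℙ : Measure Ω)
          ≤ (((n:ℝ)^2)⁻¹)^2 * (((n^2 : ℕ):ℝ) * (B^2 * m2)) :=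
            mul_le_mul_of_nonneg_left hET (by positivity)
        _ = B^2*m2 * ((n:ℝ)^2)⁻¹ := by push_cast; field_simp
  have E3 : ∀ᵐ ω ∂(ℙ : Measure Ω), Tendsto (fun n => u3 n ω) atTop (nhds 0) := by
    refine lv_ae_tendsto_zero
      (fun n => ((Finset.measurable_sum _ fun j _ =>
        (ha_meas i0 j).abs).pow_const 2).const_mul _)
      (fun n ω => mul_nonneg (by positivity) (sq_nonneg _))
      (fun n => ((lv_ED ha_meas ha_id ha_mom8 i0 (n^2) ((n+1)^2)).1).const_mul _)
      (hcsum.mul_left (9*m2)) ?_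
    intro n
    have e : ∫ ω, u3 n ω ∂(ℙ : Measure Ω)
        = (((n:ℝ)^2)⁻¹)^2 * ∫ ω, (∑ j ∈ Finset.Ico (n^2) ((n+1)^2), |a i0 j ω|)^2
            ∂(ℙ : Measure Ω) := integral_const_mul _ _
    rcases Nat.eq_zero_or_pos n with hn | hn
    · subst hn; rw [e]; simp
    · have hne : ((n:ℝ)) ≠ 0 := Nat.cast_ne_zero.mpr hn.ne'
      have hone : (1:ℝ) ≤ (n:ℝ) := by exact_mod_cast hn
      have hED := (lv_ED ha_meas ha_id ha_mom8 i0 (n^2) ((n+1)^2)).2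
      rw [← hm2] at hED
      have hcard : ((n+1)^2 - n^2 : ℕ) = 2*n+1 := by
        have h1 : (n+1)^2 = n^2 + (2*n+1) := by ring
        rw [h1, Nat.add_sub_cancel_left]
      rw [hcard] at hED
      rw [e]
      calc (((n:ℝ)^2)⁻¹)^2 * ∫ ω, (∑ j ∈ Finset.Ico (n^2) ((n+1)^2), |a i0 j ω|)^2
            ∂(ℙ : Measure Ω)
          ≤ (((n:ℝ)^2)⁻¹)^2 * (((2*n+1 : ℕ):ℝ)^2 * m2) :=
            mul_le_mul_of_nonneg_left hED (by positivity)
        _ ≤ (((n:ℝ)^2)⁻¹)^2 * (9*(n:ℝ)^2 * m2) := by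
            refine mul_le_mul_of_nonneg_left ?_ (by positivity)
            refine mul_le_mul_of_nonneg_right ?_ hm2nn
            push_cast
            nlinarith
        _ = 9*m2 * ((n:ℝ)^2)⁻¹ := by field_simp
  have E4 : ∀ᵐ ω ∂(ℙ : Measure Ω), Tendsto (fun n => u4 n ω) atTop (nhds 0) := by
    refine lv_ae_tendsto_zero
      (fun n => ((Finset.measurable_sum _ fun j _ =>
        ((ha_meas i0 j).pow_const 2).sub_const m2).pow_const 2).const_mul _)
      (fun n ω => mul_nonneg (by positivity) (sq_nonneg _))
      (fun n => ?_) (hcsum.mul_left Mc) ?_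
    · have := (lv_EQ ha_meas h_indep ha_id ha_mom8 i0 (n^2)).1
      rw [← hm2] at this
      exact this.const_mul _
    intro n
    have e : ∫ ω, u4 n ω ∂(ℙ : Measure Ω)
        = (((n:ℝ)^2)⁻¹)^2 * ∫ ω, (∑ j ∈ Finset.range (n^2), ((a i0 j ω)^2 - m2))^2
            ∂(ℙ : Measure Ω) := integral_const_mul _ _
    rcases Nat.eq_zero_or_pos n with hn | hn
    · subst hn; rw [e]; simp
    · have hne : ((n:ℝ)) ≠ 0 := Nat.cast_ne_zero.mpr hn.ne'
      have hEQ := (lv_EQ ha_meas h_indep ha_id ha_mom8 i0 (n^2)).2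
      rw [← hm2, ← hm4, ← hMc] at hEQ
      rw [e]
      calc (((n:ℝ)^2)⁻¹)^2 * ∫ ω, (∑ j ∈ Finset.range (n^2), ((a i0 j ω)^2 - m2))^2
            ∂(ℙ : Measure Ω)
          ≤ (((n:ℝ)^2)⁻¹)^2 * (((n^2 : ℕ):ℝ) * Mc) :=
            mul_le_mul_of_nonneg_left hEQ (by positivity)
        _ = Mc * ((n:ℝ)^2)⁻¹ := by push_cast; field_simp
  -- the good event
  filter_upwards [E1, E2, E3, E4, MeasureTheory.ae_all_iff.mpr h_inv]
    with ω h1 h2 h3 h4 hinv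
  set b : ℕ → ℕ → ℝ := fun p q => a p q ω with hb
  set KK : ℝ := 256*(m2+1)*B^2/(C^4*θ^2) with hKK
  -- composed tendstos
  have hksq : Tendsto (fun S : ℕ => Nat.sqrt S + 1) atTop atTop :=
    (tendsto_add_atTop_nat 1).comp lv_tendsto_sqrt
  have t1 : Tendsto (fun S => u1 (Nat.sqrt S + 1) ω) atTop (nhds 0) := h1.comp hksq
  have t2 : Tendsto (fun S => u2 (Nat.sqrt S) ω) atTop (nhds 0) := h2.comp lv_tendsto_sqrt
  have t3 : Tendsto (fun S => u3 (Nat.sqrt S) ω) atTop (nhds 0) := h3.comp lv_tendsto_sqrt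
  have t4 : Tendsto (fun S => u4 (Nat.sqrt S + 1) ω) atTop (nhds 0) := h4.comp hksq
  set bnd : ℕ → ℝ := fun S =>
    θ⁻¹^2 * (C⁻¹ * (Real.sqrt (u2 (Nat.sqrt S) ω) + B * Real.sqrt (u3 (Nat.sqrt S) ω)))
    + θ⁻¹^2 * Real.sqrt (KK * Real.sqrt (u1 (Nat.sqrt S + 1) ω)) with hbnd
  have hbnd0 : Tendsto bnd atTop (nhds 0) := by
    have s2 : Tendsto (fun S => Real.sqrt (u2 (Nat.sqrt S) ω)) atTop (nhds 0) := by
      simpa using t2.sqrt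
    have s3 : Tendsto (fun S => Real.sqrt (u3 (Nat.sqrt S) ω)) atTop (nhds 0) := by
      simpa using t3.sqrt
    have s1 : Tendsto (fun S => Real.sqrt (KK * Real.sqrt (u1 (Nat.sqrt S + 1) ω)))
        atTop (nhds 0) := by
      have := (t1.sqrt.const_mul KK).sqrt
      simpa using this
    have hcomb := (((s2.add (s3.const_mul B)).const_mul C⁻¹).const_mul (θ⁻¹^2)).add
      (s1.const_mul (θ⁻¹^2))
    rw [hbnd]
    have h0 : θ⁻¹ ^ 2 * (C⁻¹ * ((0:ℝ) + B * 0)) + θ⁻¹ ^ 2 * 0 = 0 := by ring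
    exact h0 ▸ hcomb
  -- the eventual quantitative bound
  have hEv : ∀ᶠ S in atTop,
      |weakEquilibrium a r θ C S ω i0 - (-(r i0)/θ)| ≤ bnd S := by
    have ev3 : ∀ᶠ S in atTop,
        16/C^2 * Real.sqrt (u1 (Nat.sqrt S + 1) ω) ≤ θ^2/4 := by
      have hpos : (0:ℝ) < θ^2/4 := by positivity
      have : Tendsto (fun S => 16/C^2 * Real.sqrt (u1 (Nat.sqrt S + 1) ω))
          atTop (nhds 0) := by simpa using t1.sqrt.const_mul (16/C^2)
      exact this.eventually (eventually_le_nhds hpos)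
    have ev4 : ∀ᶠ S in atTop, Real.sqrt (u4 (Nat.sqrt S + 1) ω) ≤ 1 :=
      (by simpa using t4.sqrt : Tendsto (fun S => Real.sqrt (u4 (Nat.sqrt S + 1) ω))
        atTop (nhds 0)).eventually (eventually_le_nhds one_pos)
    filter_upwards [eventually_ge_atTop 1, eventually_gt_atTop i0, ev3, ev4]
      with S hS1 hi0S hev3 hev4
    -- basic numerics
    set k := Nat.sqrt S with hk
    have hk1 : 1 ≤ k := Nat.le_sqrt.mpr (by simpa using hS1)
    have hk2S : k^2 ≤ S := Nat.sqrt_le' S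
    have hSm : S ≤ (k+1)^2 := le_of_lt (Nat.lt_succ_sqrt' S)
    have hk1R : (1:ℝ) ≤ (k:ℝ) := by exact_mod_cast hk1
    have hk2SR : ((k:ℝ))^2 ≤ (S:ℝ) := by exact_mod_cast hk2S
    have hSpos : (0:ℝ) < (S:ℝ) := by positivity
    have hkp1 : (0:ℝ) < ((k:ℝ)+1) := by positivity
    have hm4S : (((k+1):ℕ):ℝ)^2 ≤ 4*(S:ℝ) := by push_cast; nlinarith
    -- the equilibrium vector and its equation
    have hdet := hinv S
    obtain ⟨x, hx⟩ : ∃ x : Fin S → ℝ,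
        x = -((weakMatrix a θ C S ω)⁻¹ *ᵥ fun j : Fin S => r j) := ⟨_, rfl⟩
    have hweq : weakEquilibrium a r θ C S ω i0 = x ⟨i0, hi0S⟩ := by
      rw [hx]; simp [weakEquilibrium, hi0S]
    have hMx : weakMatrix a θ C S ω *ᵥ x = -(fun j : Fin S => r j) := by
      rw [hx, Matrix.mulVec_neg, Matrix.mulVec_mulVec,
        Matrix.mul_nonsing_inv _ hdet, Matrix.one_mulVec]
    have heq : ∀ p : Fin S,
        θ * x p + (C * (S:ℝ))⁻¹ * ∑ q : Fin S, b p q * x q = - r p := by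
      intro p
      have hcomp := congrFun hMx p
      have h2 : (weakMatrix a θ C S ω *ᵥ x) p
          = θ * x p + (C * (S:ℝ))⁻¹ * ∑ q : Fin S, b p q * x q := by
        have e1 : weakMatrix a θ C S ω *ᵥ x
            = θ • x + (C*(S:ℝ))⁻¹ • ((Matrix.of fun i j : Fin S => a i j ω) *ᵥ x) := by
          rw [weakMatrix, Matrix.add_mulVec, Matrix.smul_mulVec,
            Matrix.smul_mulVec, Matrix.one_mulVec]
        rw [e1]
        have e2 : ((Matrix.of fun i j : Fin S => a i j ω) *ᵥ x) p
            = ∑ q : Fin S, b p q * x q := by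
          simp [Matrix.mulVec, dotProduct, hb]
        simp only [Pi.add_apply, Pi.smul_apply, smul_eq_mul, e2]
      rw [h2] at hcomp
      simpa using hcomp
    -- operator norm bound data
    set G : ℝ := Real.sqrt (lvGram b ((k+1)^2)) with hG
    have hGnn : 0 ≤ G := Real.sqrt_nonneg _
    have hop : ∀ v : Fin S → ℝ,
        ∑ p : Fin S, (∑ q : Fin S, b p q * v q)^2 ≤ G * ∑ q : Fin S, (v q)^2 :=
      fun v => lv_corner b hSm v
    -- bound on the gram term
    have hu1nn : 0 ≤ u1 (k+1) ω := mul_nonneg (lvGram_nonneg _ _) (by positivity)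
    have f2 : (C * (S:ℝ))⁻¹^2 * G ≤ 16/C^2 * Real.sqrt (u1 (k+1) ω) := by
      have hkne : (((k+1):ℕ):ℝ) ≠ 0 := by positivity
      have hLG : lvGram b ((k+1)^2) = u1 (k+1) ω * (((k+1):ℕ):ℝ)^8 := by
        rw [hu1]
        simp only [hb]
        field_simp
      have hGe : G = Real.sqrt (u1 (k+1) ω) * (((k+1):ℕ):ℝ)^4 := by
        rw [hG, hLG, Real.sqrt_mul hu1nn]
        congr 1
        rw [show (((k+1):ℕ):ℝ)^8 = ((((k+1):ℕ):ℝ)^4)^2 by ring]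
        exact Real.sqrt_sq (by positivity)
      have key : (((k+1):ℕ):ℝ)^4 ≤ 16*(S:ℝ)^2 := by
        calc (((k+1):ℕ):ℝ)^4 = ((((k+1):ℕ):ℝ)^2)^2 := by ring
          _ ≤ (4*(S:ℝ))^2 := pow_le_pow_left₀ (by positivity) hm4S 2
          _ = 16*(S:ℝ)^2 := by ring
      have hfac : (C * (S:ℝ))⁻¹^2 * (((k+1):ℕ):ℝ)^4 ≤ 16/C^2 := by
        calc (C * (S:ℝ))⁻¹^2 * (((k+1):ℕ):ℝ)^4
            ≤ (C * (S:ℝ))⁻¹^2 * (16*(S:ℝ)^2) :=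
              mul_le_mul_of_nonneg_left key (by positivity)
          _ = 16/C^2 := by field_simp
      calc (C * (S:ℝ))⁻¹^2 * G
          = ((C * (S:ℝ))⁻¹^2 * (((k+1):ℕ):ℝ)^4) * Real.sqrt (u1 (k+1) ω) := by
            rw [hGe]; ring
        _ ≤ 16/C^2 * Real.sqrt (u1 (k+1) ω) :=
            mul_le_mul_of_nonneg_right hfac (Real.sqrt_nonneg _)
    have hEE : (C * (S:ℝ))⁻¹^2 * G ≤ θ^2/4 := le_trans f2 hev3
    -- row bound
    have hQrow : ∑ q : Fin S, (b i0 q)^2 ≤ 4*(S:ℝ)*(m2+1) := by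
      have e1 : ∑ q : Fin S, (b i0 q)^2 = ∑ j ∈ Finset.range S, (a i0 j ω)^2 := by
        rw [show (∑ q : Fin S, (b i0 q)^2) = ∑ q : Fin S, (fun j => (a i0 j ω)^2) q.val from
          Finset.sum_congr rfl fun q _ => by simp [hb]]
        exact Fin.sum_univ_eq_sum_range (fun j => (a i0 j ω)^2) S
      have e2 : ∑ j ∈ Finset.range S, (a i0 j ω)^2
          ≤ ∑ j ∈ Finset.range ((k+1)^2), (a i0 j ω)^2 :=
        Finset.sum_le_sum_of_subset_of_nonneg (Finset.range_subset_range.2 hSm)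
          (fun _ _ _ => sq_nonneg _)
      have hkk2 : (0:ℝ) ≤ ((((k+1):ℕ):ℝ)^2)⁻¹ := by positivity
      have hsq4 : Real.sqrt (u4 (k+1) ω)
          = ((((k+1):ℕ):ℝ)^2)⁻¹ * |∑ j ∈ Finset.range ((k+1)^2), ((a i0 j ω)^2 - m2)| := by
        rw [hu4]
        exact lv_sqrt_u _ _ hkk2
      have habs4 : |∑ j ∈ Finset.range ((k+1)^2), ((a i0 j ω)^2 - m2)|
          ≤ (((k+1):ℕ):ℝ)^2 := by
        have h5 := hev4
        rw [hsq4] at h5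
        have hkpos : (0:ℝ) < (((k+1):ℕ):ℝ)^2 := by positivity
        calc |∑ j ∈ Finset.range ((k+1)^2), ((a i0 j ω)^2 - m2)|
            = (((k+1):ℕ):ℝ)^2 * (((((k+1):ℕ):ℝ)^2)⁻¹
              * |∑ j ∈ Finset.range ((k+1)^2), ((a i0 j ω)^2 - m2)|) := by
              field_simp
          _ ≤ (((k+1):ℕ):ℝ)^2 * 1 := mul_le_mul_of_nonneg_left h5 (le_of_lt hkpos)
          _ = (((k+1):ℕ):ℝ)^2 := mul_one _
      have hsplit : ∑ j ∈ Finset.range ((k+1)^2), (a i0 j ω)^2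
          = (∑ j ∈ Finset.range ((k+1)^2), ((a i0 j ω)^2 - m2))
            + (((k+1)^2 : ℕ):ℝ) * m2 := by
        rw [Finset.sum_sub_distrib, Finset.sum_const, Finset.card_range, nsmul_eq_mul]
        push_cast
        ring
      have hcast : (((k+1)^2 : ℕ):ℝ) = (((k+1):ℕ):ℝ)^2 := by push_cast; ring
      calc ∑ q : Fin S, (b i0 q)^2
          = ∑ j ∈ Finset.range S, (a i0 j ω)^2 := e1
        _ ≤ ∑ j ∈ Finset.range ((k+1)^2), (a i0 j ω)^2 := e2
        _ = (∑ j ∈ Finset.range ((k+1)^2), ((a i0 j ω)^2 - m2))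
            + (((k+1)^2 : ℕ):ℝ) * m2 := hsplit
        _ ≤ (((k+1):ℕ):ℝ)^2 + (((k+1):ℕ):ℝ)^2 * m2 := by
            rw [hcast]
            have := le_trans (le_abs_self _) habs4
            linarith
        _ = (((k+1):ℕ):ℝ)^2 * (1 + m2) := by ring
        _ ≤ 4*(S:ℝ)*(m2+1) := by nlinarith [hm4S]
    -- apply the deterministic lemma
    have main := lv_det θ C hθ hC_pos b r hBnn hrB hS1 hi0S x heq hGnn hop hEE hQrow
    -- bound the first term
    have term1 : |(C * (S:ℝ))⁻¹ * ∑ q : Fin S, b i0 q * r q|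
        ≤ C⁻¹ * (Real.sqrt (u2 k ω) + B * Real.sqrt (u3 k ω)) := by
      have hkR2 : (0:ℝ) < (k:ℝ)^2 := by positivity
      have eT : ∑ q : Fin S, b i0 q * r q = ∑ j ∈ Finset.range S, a i0 j ω * r j := by
        rw [show (∑ q : Fin S, b i0 q * r q)
            = ∑ q : Fin S, (fun j => a i0 j ω * r j) q.val from
          Finset.sum_congr rfl fun q _ => by simp [hb]]
        exact Fin.sum_univ_eq_sum_range (fun j => a i0 j ω * r j) S
      set Tk := ∑ j ∈ Finset.range (k^2), a i0 j ω * r j with hTk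
      set Dk := ∑ j ∈ Finset.Ico (k^2) ((k+1)^2), |a i0 j ω| with hDk
      have hDknn : 0 ≤ Dk := Finset.sum_nonneg fun _ _ => abs_nonneg _
      have hsplitT : ∑ j ∈ Finset.range S, a i0 j ω * r j
          = Tk + ∑ j ∈ Finset.Ico (k^2) S, a i0 j ω * r j := by
        rw [hTk, Finset.range_eq_Ico, Finset.range_eq_Ico]
        exact (Finset.sum_Ico_consecutive _ (Nat.zero_le _) hk2S).symm
      have hTD : |∑ j ∈ Finset.Ico (k^2) S, a i0 j ω * r j| ≤ B * Dk := by
        calc |∑ j ∈ Finset.Ico (k^2) S, a i0 j ω * r j|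
            ≤ ∑ j ∈ Finset.Ico (k^2) S, |a i0 j ω * r j| :=
              Finset.abs_sum_le_sum_abs _ _
          _ ≤ ∑ j ∈ Finset.Ico (k^2) S, |a i0 j ω| * B := by
              refine Finset.sum_le_sum fun j _ => ?_
              rw [abs_mul]
              exact mul_le_mul_of_nonneg_left (hrB j) (abs_nonneg _)
          _ ≤ ∑ j ∈ Finset.Ico (k^2) ((k+1)^2), |a i0 j ω| * B := by
              refine Finset.sum_le_sum_of_subset_of_nonneg
                (Finset.Ico_subset_Ico_right hSm) fun j _ _ => ?_
              positivity
          _ = B * Dk := by rw [hDk, Finset.mul_sum]; exact Finset.sum_congr rfl fun _ _ => by ring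
      have hTkabs : |Tk| = (k:ℝ)^2 * Real.sqrt (u2 k ω) := by
        have : Real.sqrt (u2 k ω) = (((k:ℝ)^2)⁻¹) * |Tk| := by
          rw [hu2]; exact lv_sqrt_u _ _ (by positivity)
        rw [this]; field_simp
      have hDkabs : Dk = (k:ℝ)^2 * Real.sqrt (u3 k ω) := by
        have : Real.sqrt (u3 k ω) = (((k:ℝ)^2)⁻¹) * |Dk| := by
          rw [hu3]; exact lv_sqrt_u _ _ (by positivity)
        rw [this, abs_of_nonneg hDknn]; field_simp
      have hdle : (C * (S:ℝ))⁻¹ ≤ (C * (k:ℝ)^2)⁻¹ := by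
        refine inv_anti₀ (by positivity) ?_
        exact mul_le_mul_of_nonneg_left hk2SR (le_of_lt hC_pos)
      calc |(C * (S:ℝ))⁻¹ * ∑ q : Fin S, b i0 q * r q|
          = (C * (S:ℝ))⁻¹ * |∑ j ∈ Finset.range S, a i0 j ω * r j| := by
            rw [eT, abs_mul, abs_of_nonneg (by positivity : (0:ℝ) ≤ (C * (S:ℝ))⁻¹)]
        _ ≤ (C * (k:ℝ)^2)⁻¹ * |∑ j ∈ Finset.range S, a i0 j ω * r j| :=
            mul_le_mul_of_nonneg_right hdle (abs_nonneg _)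
        _ ≤ (C * (k:ℝ)^2)⁻¹ * (|Tk| + B * Dk) := by
            refine mul_le_mul_of_nonneg_left ?_ (by positivity)
            rw [hsplitT]
            calc |Tk + ∑ j ∈ Finset.Ico (k^2) S, a i0 j ω * r j|
                ≤ |Tk| + |∑ j ∈ Finset.Ico (k^2) S, a i0 j ω * r j| := abs_add_le _ _
              _ ≤ |Tk| + B * Dk := by linarith [hTD]
        _ = C⁻¹ * (Real.sqrt (u2 k ω) + B * Real.sqrt (u3 k ω)) := by
            rw [hTkabs, hDkabs]
            have hCne : C ≠ 0 := ne_of_gt hC_pos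
            have hkne : ((k:ℝ)^2) ≠ 0 := ne_of_gt hkR2
            field_simp

    -- bound the second term
    have term2 : Real.sqrt ((C * (S:ℝ))⁻¹^2 * (4*(S:ℝ)*(m2+1))
          * ((C * (S:ℝ))⁻¹^2 * G * (4*B^2*(S:ℝ)/θ^2)))
        ≤ Real.sqrt (KK * Real.sqrt (u1 (k+1) ω)) := by
      refine Real.sqrt_le_sqrt ?_
      have g1 : (C * (S:ℝ))⁻¹^2 * (4*(S:ℝ)*(m2+1)) = 4*(m2+1)/(C^2*(S:ℝ)) := by
        field_simp
      have hnn1 : (0:ℝ) ≤ 4*(m2+1)/(C^2*(S:ℝ)) := by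
        have : (0:ℝ) ≤ m2+1 := by linarith
        positivity
      have g3 : (0:ℝ) ≤ 4*B^2*(S:ℝ)/θ^2 := by positivity
      calc (C * (S:ℝ))⁻¹^2 * (4*(S:ℝ)*(m2+1)) * ((C * (S:ℝ))⁻¹^2 * G * (4*B^2*(S:ℝ)/θ^2))
          = (4*(m2+1)/(C^2*(S:ℝ))) * (((C * (S:ℝ))⁻¹^2 * G) * (4*B^2*(S:ℝ)/θ^2)) := by
            rw [g1]
        _ ≤ (4*(m2+1)/(C^2*(S:ℝ))) * ((16/C^2 * Real.sqrt (u1 (k+1) ω)) * (4*B^2*(S:ℝ)/θ^2)) := by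
            refine mul_le_mul_of_nonneg_left ?_ hnn1
            exact mul_le_mul_of_nonneg_right f2 g3
        _ = KK * Real.sqrt (u1 (k+1) ω) := by
            rw [hKK]
            field_simp
            ring
    -- combine
    rw [hweq, hbnd]
    calc |x ⟨i0, hi0S⟩ - (-(r i0)/θ)|
        ≤ θ⁻¹^2 * |(C * (S:ℝ))⁻¹ * ∑ q : Fin S, b i0 q * r q|
          + θ⁻¹^2 * Real.sqrt ((C * (S:ℝ))⁻¹^2 * (4*(S:ℝ)*(m2+1))
            * ((C * (S:ℝ))⁻¹^2 * G * (4*B^2*(S:ℝ)/θ^2))) := main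
      _ ≤ θ⁻¹^2 * (C⁻¹ * (Real.sqrt (u2 k ω) + B * Real.sqrt (u3 k ω)))
          + θ⁻¹^2 * Real.sqrt (KK * Real.sqrt (u1 (k+1) ω)) :=
          add_le_add (mul_le_mul_of_nonneg_left term1 (sq_nonneg _))
            (mul_le_mul_of_nonneg_left term2 (sq_nonneg _))
  -- conclude by squeezing
  have hdiff : Tendsto (fun S => weakEquilibrium a r θ C S ω i0 - (-(r i0)/θ))
      atTop (nhds 0) := by
    refine tendsto_of_tendsto_of_tendsto_of_le_of_le'
      (g := fun S => -(bnd S)) (h := bnd) (by simpa using hbnd0.neg) hbnd0 ?_ ?_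
    · filter_upwards [hEv] with S hS
      linarith [(abs_le.mp hS).1]
    · filter_upwards [hEv] with S hS
      exact (abs_le.mp hS).2
  have hL : r i0 / |θ| = -(r i0)/θ := by
    rw [habs, div_neg, neg_div]
  rw [hL]
  have := hdiff.add_const (-(r i0)/θ)
  simpa using this
end

section
/- Let θ < 0, let c > 0, and let A be an S×S real matrix with all entries nonnegative such that for every row i one has (1/c)·Σ_{j=1}^S A_{ij} < −θ. Then for every vector x ∈ ℝ^S with x_i > 0 for all i, every complex eigenvalue of the matrix diag(x)·(θI + (1/c)A) has strictly negative real part. -/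
open Matrix

/-- Geršgorin-disc step for mutualistic networks.
Let `θ < 0`, `c > 0`, and let `A` be an `S×S` real matrix with nonnegative entries whose
normalized row sums satisfy `(1/c)·Σ_j A_{ij} < −θ` for every row `i`.  Then for every vector
`x` with all coordinates positive, every complex eigenvalue of `diag(x)·(θI + (1/c)A)` has
strictly negative real part. -/
theorem re_eigenvalue_diagonal_mul_gershgorin_neg
    {S : ℕ} (θ c : ℝ) (hθ : θ < 0) (hc : 0 < c)
    (A : Matrix (Fin S) (Fin S) ℝ) (hA : ∀ i j, 0 ≤ A i j)
    (hrow : ∀ i, (1 / c) * ∑ j, A i j < -θ)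
    (x : Fin S → ℝ) (hx : ∀ i, 0 < x i)
    (μ : ℂ)
    (hμ : μ ∈ spectrum ℂ
      ((Matrix.diagonal x *
        (θ • (1 : Matrix (Fin S) (Fin S) ℝ) + (1 / c) • A)).map (Complex.ofReal : ℝ → ℂ))) :
    μ.re < 0 := by
  set B : Matrix (Fin S) (Fin S) ℝ :=
    Matrix.diagonal x * (θ • (1 : Matrix (Fin S) (Fin S) ℝ) + (1 / c) • A) with hB
  set M : Matrix (Fin S) (Fin S) ℂ := B.map (Complex.ofReal : ℝ → ℂ) with hM
  -- turn spectrum membership into an eigenvalue of `toLin' M`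
  have hE : Module.End.HasEigenvalue (Matrix.toLin' M) μ := by
    rw [← AlgEquiv.spectrum_eq (Matrix.toLinAlgEquiv (Pi.basisFun ℂ (Fin S))) M,
      ← Module.End.hasEigenvalue_iff_mem_spectrum] at hμ
    have heq : (Matrix.toLinAlgEquiv (Pi.basisFun ℂ (Fin S))) M = Matrix.toLin' M := by
      rw [← Matrix.toLin_eq_toLin']
      rfl
    rwa [heq] at hμ
  obtain ⟨k, hk⟩ := eigenvalue_mem_ball hE
  rw [Metric.mem_closedBall] at hk
  -- entries of B
  have hBentry : ∀ j, B k j = x k * (θ • (1 : Matrix (Fin S) (Fin S) ℝ) + (1 / c) • A) k j := by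
    intro j
    simp [hB, Matrix.diagonal_mul]
  have hBkk : B k k = x k * (θ + (1 / c) * A k k) := by
    rw [hBentry k]; simp [Matrix.one_apply]
  have hBoff : ∀ j, j ≠ k → B k j = x k * ((1 / c) * A k j) := by
    intro j hj
    rw [hBentry j]; simp [Matrix.one_apply, (Ne.symm hj)]
  -- bound on the real part
  have hre : μ.re ≤ B k k + ∑ j ∈ Finset.univ.erase k, ‖M k j‖ := by
    have h1 : μ.re - B k k ≤ ‖μ - M k k‖ := by
      have : μ.re - B k k = (μ - M k k).re := by
        simp [hM, Matrix.map_apply]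
      rw [this]
      exact (Complex.abs_re_le_norm _).trans' (le_abs_self _)
    have h2 : dist μ (M k k) = ‖μ - M k k‖ := by rw [dist_eq_norm]
    linarith [hk, h2 ▸ hk]
  have hnorm : ∀ j, ‖M k j‖ = |B k j| := by
    intro j; simp [hM, Matrix.map_apply, Complex.norm_real]
  have hsum : ∑ j ∈ Finset.univ.erase k, ‖M k j‖
      = ∑ j ∈ Finset.univ.erase k, x k * ((1 / c) * A k j) := by
    refine Finset.sum_congr rfl fun j hj => ?_
    have hjk : j ≠ k := (Finset.mem_erase.mp hj).1
    rw [hnorm j, hBoff j hjk, abs_of_nonneg]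
    exact mul_nonneg (hx k).le (mul_nonneg (one_div_nonneg.mpr hc.le) (hA k j))
  have hxk := hx k
  have hfull : B k k + ∑ j ∈ Finset.univ.erase k, ‖M k j‖
      = x k * (θ + (1 / c) * ∑ j, A k j) := by
    rw [hsum, hBkk]
    have h3 : ∑ j ∈ Finset.univ.erase k, x k * (1 / c * A k j)
        = x k * (1 / c * ((∑ j, A k j) - A k k)) := by
      rw [← Finset.mul_sum, ← Finset.mul_sum, Finset.sum_erase_eq_sub (Finset.mem_univ k),
        mul_sub]
    rw [h3]; ring
  have hneg : θ + (1 / c) * ∑ j, A k j < 0 := by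
    have := hrow k; linarith
  have : x k * (θ + (1 / c) * ∑ j, A k j) < 0 :=
    mul_neg_of_pos_of_neg hxk hneg
  linarith [hre, hfull ▸ hre]
end
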